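/- arXiv:1205.4340 — 4 statements merged into one kernel-verified Lean document; each statement's English description precedes it below -/
import Mathlib

section
/- For all n ≥ 1, the overpartition function satisfies p̄(n) ≤ 2·p̄(n-1). -/
/-!
Removing a non-overlined `1` is a bijection from the overpartitions of `n` that have one onto all
overpartitions of `n - 1`. The remaining overpartitions of `n` also inject into those of `n - 1`:
remove the smallest part `s`; if it is overlined put back `s - 1` non-overlined ones, otherwise put
back an overlined `1` and `s - 2` non-overlined ones. The inverse reads off the case from the
presence of an overlined `1`, and `s` from the number of non-overlined ones.
-/

/-- number of (unrestricted) partitions of `n` -/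
def partitionCount (n : ℕ) : ℕ := Fintype.card (Nat.Partition n)

/-- the overpartition function: an overpartition is equivalent to a pair consisting of a
partition into distinct parts (the overlined parts) and an arbitrary partition. -/
def overpartitionCount (n : ℕ) : ℕ :=
  ∑ x ∈ Finset.HasAntidiagonal.antidiagonal n,
    (Nat.Partition.distincts x.1).card * partitionCount x.2

/-- the overpartition function extended by `0` on negative integers -/
def pbar (m : ℤ) : ℤ := if 0 ≤ m then overpartitionCount m.toNat else 0

/-- `x.1` are the overlined parts of the overpartition, `x.2` the others. -/
structure IsOverpartition (n : ℕ) (x : Multiset ℕ × Multiset ℕ) : Prop where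
  nodup_fst : x.1.Nodup
  pos_fst : ∀ i ∈ x.1, 0 < i
  pos_snd : ∀ i ∈ x.2, 0 < i
  sum_add_sum : x.1.sum + x.2.sum = n

section Encoding

open Finset

noncomputable def overpartitions (n : ℕ) : Finset (Multiset ℕ × Multiset ℕ) :=
  (antidiagonal n).biUnion fun ab =>
    (Nat.Partition.distincts ab.1).image Nat.Partition.parts ×ˢ
      (univ : Finset (Nat.Partition ab.2)).image Nat.Partition.parts

theorem mem_overpartitions {n : ℕ} {x : Multiset ℕ × Multiset ℕ} :
    x ∈ overpartitions n ↔ IsOverpartition n x := by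
  obtain ⟨μ, ν⟩ := x
  simp only [overpartitions, mem_biUnion, HasAntidiagonal.mem_antidiagonal, mem_product,
    mem_image, Nat.Partition.distincts, mem_filter, mem_univ, true_and]
  constructor
  · rintro ⟨ab, hab, ⟨p, hp, rfl⟩, ⟨q, rfl⟩⟩
    exact ⟨hp, fun _ => p.parts_pos, fun _ => q.parts_pos, by rw [p.parts_sum, q.parts_sum, hab]⟩
  · rintro ⟨hnd, hpos₁, hpos₂, hsum⟩
    exact ⟨(μ.sum, ν.sum), hsum, ⟨⟨μ, hpos₁ _, rfl⟩, hnd, rfl⟩, ⟨⟨ν, hpos₂ _, rfl⟩, rfl⟩⟩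

theorem card_overpartitions (n : ℕ) : #(overpartitions n) = overpartitionCount n := by
  have parts_injective (m : ℕ) : Function.Injective (Nat.Partition.parts (n := m)) :=
    fun _ _ => Nat.Partition.ext
  rw [overpartitions, card_biUnion]
  · refine Finset.sum_congr rfl fun ab _ => ?_
    rw [card_product, card_image_of_injective _ (parts_injective _),
      card_image_of_injective _ (parts_injective _), card_univ]
    rfl
  · intro ab _ cd _ hne
    refine disjoint_left.2 fun x hab hcd => hne ?_
    simp only [mem_product, mem_image, mem_univ, true_and] at hab hcd
    obtain ⟨⟨p, -, hp⟩, q, hq⟩ := hab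
    obtain ⟨⟨p', -, hp'⟩, q', hq'⟩ := hcd
    exact Prod.ext (by rw [← p.parts_sum, ← p'.parts_sum, hp, hp'])
      (by rw [← q.parts_sum, ← q'.parts_sum, hq, hq'])

end Encoding

section ShiftDown

open Multiset

variable {n : ℕ} {x : Multiset ℕ × Multiset ℕ}

noncomputable def smallestPart (x : Multiset ℕ × Multiset ℕ) : ℕ :=
  sInf {k | k ∈ x.1 + x.2}

theorem smallestPart_le {k : ℕ} (hk : k ∈ x.1 + x.2) : smallestPart x ≤ k :=
  Nat.sInf_le hk

theorem smallestPart_mem_of_mem {k : ℕ} (hk : k ∈ x.1 + x.2) : smallestPart x ∈ x.1 + x.2 :=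
  Nat.sInf_mem (s := {k | k ∈ x.1 + x.2}) ⟨k, hk⟩

theorem IsOverpartition.pos_of_mem_add (hx : IsOverpartition n x) {k : ℕ} (hk : k ∈ x.1 + x.2) :
    0 < k :=
  (mem_add.1 hk).elim (hx.pos_fst k) (hx.pos_snd k)

theorem IsOverpartition.smallestPart_eq_one (hx : IsOverpartition n x) (h : 1 ∈ x.1 + x.2) :
    smallestPart x = 1 :=
  le_antisymm (smallestPart_le h) (hx.pos_of_mem_add (smallestPart_mem_of_mem h))

theorem IsOverpartition.smallestPart_mem_snd (hx : IsOverpartition n x) (hn : 1 ≤ n)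
    (hs : smallestPart x ∉ x.1) : smallestPart x ∈ x.2 := by
  obtain ⟨k, hk⟩ := exists_mem_of_ne_zero (s := x.1 + x.2) fun h => by
    have := hx.sum_add_sum
    rw [← sum_add, h, sum_zero] at this
    omega
  exact (mem_add.1 (smallestPart_mem_of_mem hk)).resolve_left hs

theorem IsOverpartition.two_le_smallestPart (hx : IsOverpartition n x)
    (hs : smallestPart x ∈ x.2) (h1 : 1 ∉ x.2) : 2 ≤ smallestPart x :=
  lt_of_le_of_ne (hx.pos_snd _ hs) (ne_of_mem_of_not_mem hs h1).symm

theorem IsOverpartition.one_notMem_erase_smallestPart (hx : IsOverpartition n x) :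
    1 ∉ x.1.erase (smallestPart x) := fun h => by
  rw [hx.smallestPart_eq_one (mem_add.2 (.inl (mem_of_mem_erase h)))] at h
  exact hx.nodup_fst.notMem_erase h

theorem IsOverpartition.one_notMem_fst (hx : IsOverpartition n x) (hs : smallestPart x ∉ x.1) :
    1 ∉ x.1 := fun h => hs (hx.smallestPart_eq_one (mem_add.2 (.inl h)) ▸ h)

/-- The first component says whether a non-overlined `1` was removed. -/
noncomputable def shiftDown (x : Multiset ℕ × Multiset ℕ) : Bool × (Multiset ℕ × Multiset ℕ) :=
  let s := smallestPart x
  if 1 ∈ x.2 then (true, (x.1, x.2.erase 1))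
  else if s ∈ x.1 then (false, (x.1.erase s, x.2 + replicate (s - 1) 1))
  else (false, (1 ::ₘ x.1, x.2.erase s + replicate (s - 2) 1))

def shiftUp : Bool × (Multiset ℕ × Multiset ℕ) → Multiset ℕ × Multiset ℕ
  | (true, (μ, ν)) => (μ, 1 ::ₘ ν)
  | (false, (μ, ν)) =>
    if 1 ∈ μ then (μ.erase 1, (ν.count 1 + 2) ::ₘ ν.filter (· ≠ 1))
    else ((ν.count 1 + 1) ::ₘ μ, ν.filter (· ≠ 1))

theorem count_one_add_replicate {ν : Multiset ℕ} (h : 1 ∉ ν) (k : ℕ) :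
    (ν + replicate k 1).count 1 = k := by
  simp [count_eq_zero.2 h]

theorem filter_ne_one_add_replicate {ν : Multiset ℕ} (h : 1 ∉ ν) (k : ℕ) :
    (ν + replicate k 1).filter (· ≠ 1) = ν := by
  rw [filter_add, filter_eq_self.2 fun _ ha => ne_of_mem_of_not_mem ha h,
    filter_eq_nil.2 fun a ha => not_not.2 (eq_of_mem_replicate ha), add_zero]

theorem pos_of_mem_add_replicate_one {ν : Multiset ℕ} (h : ∀ i ∈ ν, 0 < i) (k : ℕ) :
    ∀ i ∈ ν + replicate k 1, 0 < i := by
  simp only [mem_add, mem_replicate]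
  rintro i (hi | ⟨-, rfl⟩)
  exacts [h i hi, one_pos]

theorem IsOverpartition.shiftDown_snd (hx : IsOverpartition n x) (hn : 1 ≤ n) :
    IsOverpartition (n - 1) (shiftDown x).2 := by
  obtain ⟨μ, ν⟩ := x
  have ⟨hnd, hμ, hν, hsum⟩ := hx
  dsimp only at hnd hμ hν hsum
  set s := smallestPart (μ, ν) with hs_def
  by_cases h1 : 1 ∈ ν
  · have := sum_erase h1
    simp only [shiftDown, if_pos h1]
    exact ⟨hnd, hμ, fun i hi => hν i (mem_of_mem_erase hi), by dsimp only; omega⟩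
  by_cases hs : s ∈ μ
  · have := sum_erase hs
    have := hμ s hs
    simp only [shiftDown, if_neg h1, ← hs_def, if_pos hs]
    refine ⟨hnd.erase s, fun i hi => hμ i (mem_of_mem_erase hi),
      pos_of_mem_add_replicate_one hν _, ?_⟩
    simp only [sum_add, sum_replicate, smul_eq_mul, mul_one]
    omega
  have hsν : s ∈ ν := hx.smallestPart_mem_snd hn hs
  have hs_two : 2 ≤ s := hx.two_le_smallestPart hsν h1
  have := sum_erase hsν
  simp only [shiftDown, if_neg h1, ← hs_def, if_neg hs]
  refine ⟨nodup_cons.2 ⟨hx.one_notMem_fst hs, hnd⟩, forall_mem_cons.2 ⟨one_pos, hμ⟩,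
    pos_of_mem_add_replicate_one (fun i hi => hν i (mem_of_mem_erase hi)) _, ?_⟩
  simp only [sum_cons, sum_add, sum_replicate, smul_eq_mul, mul_one]
  omega

theorem IsOverpartition.shiftUp_shiftDown (hx : IsOverpartition n x) (hn : 1 ≤ n) :
    shiftUp (shiftDown x) = x := by
  obtain ⟨μ, ν⟩ := x
  set s := smallestPart (μ, ν) with hs_def
  by_cases h1 : 1 ∈ ν
  · simp only [shiftDown, if_pos h1, shiftUp, cons_erase h1]
  by_cases hs : s ∈ μ
  · have hs_pos : 0 < s := hx.pos_fst s hs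
    have h1' : 1 ∉ μ.erase s := hx.one_notMem_erase_smallestPart
    simp only [shiftDown, if_neg h1, ← hs_def, if_pos hs, shiftUp, if_neg h1',
      count_one_add_replicate h1, filter_ne_one_add_replicate h1, Nat.sub_add_cancel hs_pos, cons_erase hs]
  have hsν : s ∈ ν := hx.smallestPart_mem_snd hn hs
  have h1' : 1 ∉ ν.erase s := fun h => h1 (mem_of_mem_erase h)
  have hs_two : 2 ≤ s := hx.two_le_smallestPart hsν h1
  simp only [shiftDown, if_neg h1, ← hs_def, if_neg hs, shiftUp, if_pos (mem_cons_self 1 μ),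
    erase_cons_head, count_one_add_replicate h1', filter_ne_one_add_replicate h1',
    Nat.sub_add_cancel hs_two, cons_erase hsν]

end ShiftDown

theorem overpartition_le_two_mul (n : ℕ) (hn : 1 ≤ n) :
    overpartitionCount n ≤ 2 * overpartitionCount (n - 1) := by
  have maps_to : ∀ x ∈ overpartitions n,
      shiftDown x ∈ (Finset.univ : Finset Bool) ×ˢ overpartitions (n - 1) := fun x hx =>
    Finset.mem_product.2 ⟨Finset.mem_univ _,
      mem_overpartitions.2 ((mem_overpartitions.1 hx).shiftDown_snd hn)⟩
  have left_inv : Set.LeftInvOn shiftUp shiftDown (overpartitions n) := fun x hx =>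
    (mem_overpartitions.1 hx).shiftUp_shiftDown hn
  calc overpartitionCount n = (overpartitions n).card := (card_overpartitions n).symm
    _ ≤ ((Finset.univ : Finset Bool) ×ˢ overpartitions (n - 1)).card :=
      Finset.card_le_card_of_injOn shiftDown maps_to left_inv.injOn
    _ = 2 * overpartitionCount (n - 1) := by simp [card_overpartitions]
end

section
/- For all n ≥ 1 and k ≥ 1, (-1)^k ( p̄(n) + 2 ∑_{j=1}^{k} (-1)^j p̄(n - j²) ) ≥ 0, where p̄(m) = 0 for m < 0. Moreover the inequality is strict when n ≥ (k+1)². -/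
/-!
Gauss's identity `∑_{j ∈ ℤ} (-1)^j q^(j^2) = ∏_{m ≥ 1} (1 - q^m) / (1 + q^m)` says that the theta
series is the reciprocal of the overpartition generating function, so that
`p̄(n) + 2 ∑_{j ≥ 1} (-1)^j p̄(n - j^2) = 0` for `n ≥ 1`. Hence `(-1)^k` times the truncated sum is
twice the alternating tail `p̄(n - (k+1)^2) - p̄(n - (k+2)^2) + ⋯`, which is nonnegative because `p̄`
is nondecreasing, and positive when `n ≥ (k+1)^2` because `p̄` is strictly increasing on `ℕ`.

Gauss's identity is only needed modulo `X^(2n+1)`, where it follows from a finite form: the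
q-binomial theorem with `q = X^2`, applied to `∏_{i<2n} (X^(2n) - X^(2i+1))`, gives
`(X; X^2)_n^2 = ∑_{|j| ≤ n} (-1)^j X^(j^2) [2n, n+j]_{X^2}`, and
`[2n, n+j]_{X^2} (X^2; X^2)_n ≡ 1` modulo `X^(2(n-|j|)+2)`.
-/

open Finset PowerSeries

namespace TruncatedGauss

section FiniteSums

lemma sum_range_two_mul_add_one_dist {M : Type*} [AddCommMonoid M] (f : ℕ → M) (n : ℕ) :
    ∑ k ∈ range (2 * n + 1), f (Nat.dist k n) = f 0 + 2 • ∑ j ∈ Icc 1 n, f j := by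
  induction n with
  | zero => simp [Nat.dist]
  | succ n ih =>
    have hshift (k : ℕ) : Nat.dist (k + 1) (n + 1) = Nat.dist k n := by unfold Nat.dist; omega
    rw [show 2 * (n + 1) + 1 = 2 * n + 1 + 1 + 1 by ring, sum_range_succ', sum_range_succ,
      hshift, show Nat.dist 0 (n + 1) = n + 1 by unfold Nat.dist; omega,
      show Nat.dist (2 * n + 1) n = n + 1 by unfold Nat.dist; omega]
    simp only [hshift, ih, sum_Icc_succ_top (Nat.le_add_left 1 n), smul_add, two_nsmul]
    abel

lemma prod_range_two_mul {M : Type*} [CommMonoid M] (f : ℕ → M) (n : ℕ) :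
    ∏ i ∈ range (2 * n), f i = (∏ i ∈ range n, f (2 * i)) * ∏ i ∈ range n, f (2 * i + 1) := by
  induction n with
  | zero => simp
  | succ n ih =>
    rw [show 2 * (n + 1) = 2 * n + 1 + 1 by ring, prod_range_succ, prod_range_succ, ih,
      prod_range_succ, prod_range_succ]
    ac_rfl

lemma sum_Icc_add_eq_sum_Icc_add_sum_range {M : Type*} [AddCommMonoid M] (f : ℕ → M) (k n : ℕ) :
    ∑ j ∈ Icc 1 (k + n), f j = ∑ j ∈ Icc 1 k, f j + ∑ i ∈ range n, f (k + 1 + i) := by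
  induction n with
  | zero => simp
  | succ n ih =>
    rw [← add_assoc, sum_Icc_succ_top (by omega), ih, sum_range_succ, add_assoc,
      show k + 1 + n = k + n + 1 by ring]

lemma two_mul_choose_two_add_self (k : ℕ) : 2 * k.choose 2 + k = k ^ 2 := by
  induction k with
  | zero => rfl
  | succ k ih => rw [Nat.choose_succ_succ, Nat.choose_one_right]; nlinarith

lemma sq_add_two_mul_mul_sub_eq {n k : ℕ} (hk : k ≤ 2 * n) :
    k ^ 2 + 2 * n * (2 * n - k) = 3 * n ^ 2 + Nat.dist k n ^ 2 := by
  rcases le_total k n with h | h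
  · obtain ⟨a, rfl⟩ := Nat.exists_eq_add_of_le h
    rw [show 2 * (k + a) - k = k + 2 * a by omega,
      show Nat.dist k (k + a) = a by unfold Nat.dist; omega]
    ring
  · obtain ⟨a, rfl⟩ := Nat.exists_eq_add_of_le h
    obtain ⟨b, rfl⟩ := Nat.exists_eq_add_of_le (show a ≤ n by omega)
    rw [show 2 * (a + b) - (a + b + a) = b by omega,
      show Nat.dist (a + b + a) (a + b) = a by unfold Nat.dist; omega]
    ring

lemma neg_one_pow_add_eq_neg_one_pow_dist {R : Type*} [Monoid R] [HasDistribNeg R] (k n : ℕ) :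
    (-1 : R) ^ (k + n) = (-1) ^ Nat.dist k n := by
  rw [show k + n = Nat.dist k n + 2 * min k n by unfold Nat.dist; omega, pow_add, pow_mul,
    neg_one_sq, one_pow, mul_one]

end FiniteSums

section Alternating

variable {α : Type*}

lemma sum_range_succ_neg_one_pow_mul [Ring α] (u : ℕ → α) (m : ℕ) :
    ∑ i ∈ range (m + 1), (-1) ^ i * u i = u 0 - ∑ i ∈ range m, (-1) ^ i * u (i + 1) := by
  rw [sum_range_succ', sub_eq_add_neg, add_comm, ← sum_neg_distrib]
  simp [pow_succ]

variable [CommRing α] [LinearOrder α] [IsStrictOrderedRing α]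

theorem _root_.Antitone.sum_range_neg_one_pow_mul_mem_Icc {u : ℕ → α} (hu : Antitone u)
    (hu0 : ∀ i, 0 ≤ u i) (m : ℕ) : ∑ i ∈ range m, (-1) ^ i * u i ∈ Set.Icc 0 (u 0) := by
  induction m generalizing u with
  | zero => simpa using hu0 0
  | succ m ih =>
    obtain ⟨hlow, hup⟩ := ih (u := fun i ↦ u (i + 1)) (fun i j hij ↦ hu (by omega)) fun i ↦ hu0 _
    have h10 := hu (Nat.zero_le 1)
    rw [sum_range_succ_neg_one_pow_mul]
    constructor <;> linarith

theorem _root_.Antitone.sum_range_neg_one_pow_mul_pos {u : ℕ → α} (hu : Antitone u)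
    (hu0 : ∀ i, 0 ≤ u i) (h10 : u 1 < u 0) (m : ℕ) :
    0 < ∑ i ∈ range (m + 1), (-1) ^ i * u i := by
  obtain ⟨-, hup⟩ := Antitone.sum_range_neg_one_pow_mul_mem_Icc (u := fun i ↦ u (i + 1))
    (fun i j hij ↦ hu (by omega)) (fun i ↦ hu0 _) m
  rw [sum_range_succ_neg_one_pow_mul]
  linarith

end Alternating

section QBinomial

variable {R : Type*}

def qBinomial [CommSemiring R] (q : R) : ℕ → ℕ → R
  | _, 0 => 1
  | 0, _ + 1 => 0
  | N + 1, k + 1 => qBinomial q N k + q ^ (k + 1) * qBinomial q N (k + 1)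

section CommSemiring

variable [CommSemiring R] (q : R)

@[simp]
lemma qBinomial_zero_right (N : ℕ) : qBinomial q N 0 = 1 := by
  cases N <;> rfl

lemma qBinomial_succ_succ (N k : ℕ) :
    qBinomial q (N + 1) (k + 1) = qBinomial q N k + q ^ (k + 1) * qBinomial q N (k + 1) :=
  rfl

lemma qBinomial_eq_zero_of_lt {N k : ℕ} (h : N < k) : qBinomial q N k = 0 := by
  induction N generalizing k with
  | zero => obtain ⟨k, rfl⟩ := Nat.exists_eq_succ_of_ne_zero (by omega : k ≠ 0); rfl
  | succ N ih =>
    obtain ⟨k, rfl⟩ := Nat.exists_eq_succ_of_ne_zero (by omega : k ≠ 0)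
    rw [qBinomial_succ_succ, ih (by omega), ih (by omega), mul_zero, add_zero]

theorem prod_range_add_mul_pow_eq_sum_qBinomial (x y : R) (N : ℕ) :
    ∏ i ∈ range N, (y + x * q ^ i) =
      ∑ p ∈ antidiagonal N, q ^ p.1.choose 2 * qBinomial q N p.1 * x ^ p.1 * y ^ p.2 := by
  induction N generalizing x with
  | zero => simp
  | succ N ih =>
    have hchoose (k : ℕ) : (k + 1).choose 2 = k.choose 2 + k := by
      rw [Nat.choose_succ_succ, Nat.choose_one_right, add_comm]
    set s : ℕ × ℕ → R := fun p ↦ q ^ (p.1 + 1).choose 2 * qBinomial q N p.1 * x ^ p.1 * y ^ p.2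
    have hshift : ∑ p ∈ antidiagonal N, s (p.1, p.2 + 1) =
        y ^ (N + 1) + ∑ p ∈ antidiagonal N, s (p.1 + 1, p.2) := by
      have hlast : s (N + 1, 0) = 0 := by simp [s, qBinomial_eq_zero_of_lt q (Nat.lt_succ_self N)]
      rw [← zero_add (∑ p ∈ antidiagonal N, s (p.1, p.2 + 1)), ← hlast,
        ← Nat.sum_antidiagonal_succ' (f := s), Nat.sum_antidiagonal_succ]
      simp [s]
    calc ∏ i ∈ range (N + 1), (y + x * q ^ i)
        = (y + x) * ∏ i ∈ range N, (y + x * q * q ^ i) := by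
          rw [prod_range_succ', pow_zero, mul_one, mul_comm]
          congr 1
          exact prod_congr rfl fun i _ ↦ by ring
      _ = ∑ p ∈ antidiagonal N, s (p.1, p.2 + 1) + ∑ p ∈ antidiagonal N,
            q ^ (p.1 + 1).choose 2 * qBinomial q N p.1 * x ^ (p.1 + 1) * y ^ p.2 := by
          rw [ih, add_mul, mul_sum, mul_sum]
          congr 1 <;> refine sum_congr rfl fun p _ ↦ ?_ <;> simp only [s, hchoose] <;> ring
      _ = ∑ p ∈ antidiagonal (N + 1),
            q ^ p.1.choose 2 * qBinomial q (N + 1) p.1 * x ^ p.1 * y ^ p.2 := by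
          rw [hshift, Nat.sum_antidiagonal_succ, add_assoc, ← sum_add_distrib]
          simp only [s, qBinomial_succ_succ, hchoose]
          congr 1
          · simp
          · exact sum_congr rfl fun p _ ↦ by ring

end CommSemiring

section CommRing

variable [CommRing R] (q : R)

/-- `(q; q)_n` in q-series notation. -/
def qPochhammer (n : ℕ) : R := ∏ i ∈ range n, (1 - q ^ (i + 1))

@[simp]
lemma qPochhammer_zero : qPochhammer q 0 = 1 := prod_range_zero _

lemma qPochhammer_add (m n : ℕ) :
    qPochhammer q (m + n) = qPochhammer q m * ∏ i ∈ range n, (1 - q ^ (m + i + 1)) :=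
  prod_range_add _ m n

theorem qBinomial_mul_qPochhammer_mul_qPochhammer {N k : ℕ} (hk : k ≤ N) :
    qBinomial q N k * qPochhammer q k * qPochhammer q (N - k) = qPochhammer q N := by
  induction N generalizing k with
  | zero =>
    obtain rfl : k = 0 := by omega
    simp
  | succ N ih =>
    rcases k with _ | k
    · simp
    have hstep : qPochhammer q (k + 1) = qPochhammer q k * (1 - q ^ (k + 1)) :=
      prod_range_succ _ k
    rw [qBinomial_succ_succ, Nat.add_sub_add_right, hstep, qPochhammer_add q N 1]
    rcases (show k ≤ N by omega).lt_or_eq with hlt | rfl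
    · obtain ⟨m, rfl⟩ := Nat.exists_eq_add_of_lt hlt
      have h1 := ih (k := k) (by omega)
      have h2 := ih (k := k + 1) (by omega)
      rw [show k + m + 1 - k = m + 1 by omega, qPochhammer_add q m 1] at h1
      rw [show k + m + 1 - (k + 1) = m by omega, hstep] at h2
      rw [show k + m + 1 - k = m + 1 by omega, qPochhammer_add q m 1]
      simp only [range_one, prod_singleton, add_zero] at h1 ⊢
      linear_combination (1 - q ^ (k + 1)) * h1 + q ^ (k + 1) * (1 - q ^ (m + 1)) * h2
    · have h := ih le_rfl
      rw [Nat.sub_self, qPochhammer_zero, mul_one] at h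
      rw [qBinomial_eq_zero_of_lt q (Nat.lt_succ_self k), Nat.sub_self, qPochhammer_zero]
      simp only [range_one, prod_singleton, add_zero]
      linear_combination (1 - q ^ (k + 1)) * h

lemma one_sub_pow_smodEq_one {M e : ℕ} (h : M ≤ e) :
    1 - q ^ e ≡ 1 [SMOD Ideal.span {q ^ M}] := by
  rw [SModEq.sub_mem, sub_sub_cancel_left, neg_mem_iff]
  exact Ideal.mem_span_singleton.mpr (pow_dvd_pow q h)

lemma prod_one_sub_pow_smodEq_one {M m : ℕ} (h : M ≤ m + 1) (n : ℕ) :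
    ∏ i ∈ range n, (1 - q ^ (m + i + 1)) ≡ 1 [SMOD Ideal.span {q ^ M}] := by
  simpa using SModEq.prod fun i _ ↦ one_sub_pow_smodEq_one q (by omega : M ≤ m + i + 1)

theorem qBinomial_mul_qPochhammer_smodEq_one [IsDomain R] {a b c n : ℕ} (hab : a ≤ b)
    (hc : c = a ∨ c = b) (hn : a ≤ n) (hq : qPochhammer q b ≠ 0) :
    qBinomial q (a + b) c * qPochhammer q n ≡ 1 [SMOD Ideal.span {q ^ (a + 1)}] := by
  have hfactor : qBinomial q (a + b) c * qPochhammer q a * qPochhammer q b =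
      qPochhammer q (a + b) := by
    rcases hc with rfl | rfl
    · simpa using qBinomial_mul_qPochhammer_mul_qPochhammer q (Nat.le_add_right c b)
    · simpa [add_comm a c, mul_right_comm] using
        qBinomial_mul_qPochhammer_mul_qPochhammer q (Nat.le_add_left c a)
  have hcancel : qBinomial q (a + b) c * qPochhammer q a =
      ∏ i ∈ range a, (1 - q ^ (b + i + 1)) := by
    refine mul_right_cancel₀ hq ?_
    rw [hfactor, add_comm a b, qPochhammer_add, mul_comm]
  obtain ⟨r, rfl⟩ := Nat.exists_eq_add_of_le hn
  calc qBinomial q (a + b) c * qPochhammer q (a + r)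
      = qBinomial q (a + b) c * qPochhammer q a * ∏ i ∈ range r, (1 - q ^ (a + i + 1)) := by
        rw [qPochhammer_add, mul_assoc]
    _ ≡ (∏ i ∈ range a, (1 - q ^ (b + i + 1))) * 1 [SMOD Ideal.span {q ^ (a + 1)}] := by
        rw [hcancel]
        exact SModEq.rfl.mul (prod_one_sub_pow_smodEq_one q le_rfl r)
    _ ≡ 1 [SMOD Ideal.span {q ^ (a + 1)}] := by
        simpa using prod_one_sub_pow_smodEq_one q (by omega) a

end CommRing

end QBinomial

section GaussFinite

variable {R : Type*} [CommRing R]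

lemma prod_range_pow_two_mul_add_one (x : R) (n : ℕ) :
    ∏ i ∈ range n, x ^ (2 * i + 1) = x ^ (n ^ 2) := by
  induction n with
  | zero => simp
  | succ n ih => rw [prod_range_succ, ih, ← pow_add]; ring_nf

lemma prod_range_two_mul_pow_sub_pow (x : R) (n : ℕ) :
    ∏ i ∈ range (2 * n), (x ^ (2 * n) - x ^ (2 * i + 1)) =
      (-1) ^ n * x ^ (3 * n ^ 2) * (∏ i ∈ range n, (1 - x ^ (2 * i + 1))) ^ 2 := by
  have hlow : ∀ i ∈ range n, x ^ (2 * n) - x ^ (2 * i + 1) =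
      (-1) * x ^ (2 * i + 1) * (1 - x ^ (2 * (n - 1 - i) + 1)) := by
    intro i hi
    rw [show 2 * n = 2 * i + 1 + (2 * (n - 1 - i) + 1) by rw [mem_range] at hi; omega, pow_add]
    ring
  have hhigh (i : ℕ) :
      x ^ (2 * n) - x ^ (2 * (n + i) + 1) = x ^ (2 * n) * (1 - x ^ (2 * i + 1)) := by
    rw [show 2 * (n + i) + 1 = 2 * n + (2 * i + 1) by ring, pow_add]
    ring
  rw [show 2 * n = n + n by ring, prod_range_add, ← two_mul, prod_congr rfl hlow,
    prod_congr rfl fun i _ ↦ hhigh i, prod_mul_distrib, prod_mul_distrib, prod_mul_distrib,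
    prod_range_reflect (fun i ↦ 1 - x ^ (2 * i + 1)), prod_const, prod_const, card_range,
    prod_range_pow_two_mul_add_one, ← pow_mul, show 3 * n ^ 2 = n ^ 2 + 2 * n * n by ring,
    pow_add]
  ring

theorem sq_prod_one_sub_pow_eq_sum_qBinomial [IsDomain R] {x : R} (hx : x ≠ 0) (n : ℕ) :
    (∏ i ∈ range n, (1 - x ^ (2 * i + 1))) ^ 2 =
      ∑ k ∈ range (2 * n + 1),
        (-1) ^ Nat.dist k n * x ^ Nat.dist k n ^ 2 * qBinomial (x ^ 2) (2 * n) k := by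
  have h := prod_range_add_mul_pow_eq_sum_qBinomial (x ^ 2) (-x) (x ^ (2 * n)) (2 * n)
  have hsign (k : ℕ) : (-1 : R) ^ k = (-1) ^ n * (-1) ^ Nat.dist k n := by
    rw [← neg_one_pow_add_eq_neg_one_pow_dist, ← pow_add, add_comm n, add_assoc, ← two_mul,
      pow_add, pow_mul, neg_one_sq, one_pow, mul_one]
  have hterm : ∀ k ∈ range (2 * n + 1),
      (x ^ 2) ^ k.choose 2 * qBinomial (x ^ 2) (2 * n) k * (-x) ^ k * (x ^ (2 * n)) ^ (2 * n - k) =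
        (-1) ^ n * x ^ (3 * n ^ 2) *
          ((-1) ^ Nat.dist k n * x ^ Nat.dist k n ^ 2 * qBinomial (x ^ 2) (2 * n) k) := by
    intro k hk
    have hexp : x ^ (2 * k.choose 2) * x ^ k * x ^ (2 * n * (2 * n - k)) =
        x ^ (3 * n ^ 2) * x ^ Nat.dist k n ^ 2 := by
      rw [← pow_add, ← pow_add, ← pow_add, two_mul_choose_two_add_self,
        sq_add_two_mul_mul_sub_eq (by rw [mem_range] at hk; omega)]
    rw [neg_pow, hsign, ← pow_mul, ← pow_mul]
    linear_combination ((-1) ^ n * (-1) ^ Nat.dist k n * qBinomial (x ^ 2) (2 * n) k) * hexp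
  rw [Nat.sum_antidiagonal_eq_sum_range_succ_mk, sum_congr rfl hterm, ← mul_sum,
    prod_congr rfl fun i _ ↦ show x ^ (2 * n) + -x * (x ^ 2) ^ i = x ^ (2 * n) - x ^ (2 * i + 1)
      by ring, prod_range_two_mul_pow_sub_pow] at h
  exact mul_left_cancel₀ (mul_ne_zero (pow_ne_zero _ (neg_ne_zero.mpr one_ne_zero))
    (pow_ne_zero _ hx)) h

end GaussFinite

section PowerSeriesCongruence

variable {R : Type*} [CommRing R]

lemma smodEq_X_pow_iff {f g : R⟦X⟧} {M : ℕ} :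
    f ≡ g [SMOD Ideal.span {X ^ M}] ↔ ∀ i < M, coeff i f = coeff i g := by
  simp_rw [SModEq.sub_mem, Ideal.mem_span_singleton, X_pow_dvd_iff, map_sub, sub_eq_zero]

lemma _root_.SModEq.mul_left_span_singleton {x y m : R} (c : R)
    (h : x ≡ y [SMOD Ideal.span {m}]) : c * x ≡ c * y [SMOD Ideal.span {c * m}] := by
  rw [SModEq.sub_mem, Ideal.mem_span_singleton] at h ⊢
  rw [← mul_sub]
  exact mul_dvd_mul_left c h

open scoped PowerSeries.WithPiTopology in
theorem _root_.HasProd.smodEq_prod_range [TopologicalSpace R] [T2Space R] {f : ℕ → R⟦X⟧}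
    {a : R⟦X⟧} (h : HasProd f a) {M N : ℕ} (hf : ∀ i ≥ N, f i ≡ 1 [SMOD Ideal.span {X ^ M}]) :
    a ≡ ∏ i ∈ range N, f i [SMOD Ideal.span {X ^ M}] := by
  have hclosed : IsClosed {g : R⟦X⟧ | g ≡ ∏ i ∈ range N, f i [SMOD Ideal.span {X ^ M}]} := by
    simp_rw [smodEq_X_pow_iff, Set.ofPred_forall]
    exact isClosed_iInter fun i ↦ isClosed_iInter fun _ ↦
      isClosed_eq (WithPiTopology.continuous_coeff R i) continuous_const
  refine hclosed.mem_of_tendsto h (Filter.eventually_atTop.mpr ⟨range N, fun s hs ↦ ?_⟩)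
  rw [Set.mem_ofPred_eq, ← prod_sdiff hs]
  simpa using SModEq.mul (SModEq.prod fun i hi ↦ hf i (by simpa using (mem_sdiff.mp hi).2))
    (SModEq.refl (∏ i ∈ range N, f i))

lemma qPochhammer_ne_zero [Nontrivial R] {q : R⟦X⟧} (hq : constantCoeff q = 0) (n : ℕ) :
    qPochhammer q n ≠ 0 := fun h ↦ by
  simpa [h, qPochhammer, map_prod, hq] using congrArg constantCoeff h

end PowerSeriesCongruence

section Theta

/-- `∑_{|j| ≤ n} (-1)^j X^(j^2)`, a truncation of Gauss's theta series. -/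
noncomputable def partialTheta (n : ℕ) : ℤ⟦X⟧ := 1 + 2 * ∑ j ∈ Icc 1 n, (-1) ^ j * X ^ (j ^ 2)

lemma X_pow_mul_qBinomial_mul_qPochhammer_smodEq {n k : ℕ} (hk : k ≤ 2 * n) :
    X ^ Nat.dist k n ^ 2 * (qBinomial (X ^ 2) (2 * n) k * qPochhammer (X ^ 2) n) ≡
      (X : ℤ⟦X⟧) ^ Nat.dist k n ^ 2 [SMOD Ideal.span {X ^ (2 * n + 1)}] := by
  set d := Nat.dist k n
  have hd : d ≤ n := by unfold d Nat.dist; omega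
  have hcongr : qBinomial (X ^ 2) (n - d + (n + d)) k * qPochhammer (X ^ 2) n ≡ 1
      [SMOD Ideal.span {((X : ℤ⟦X⟧) ^ 2) ^ (n - d + 1)}] :=
    qBinomial_mul_qPochhammer_smodEq_one _ (by omega) (by unfold d Nat.dist; omega) (by omega)
      (qPochhammer_ne_zero (by simp) _)
  rw [show n - d + (n + d) = 2 * n by omega] at hcongr
  have hmono : Ideal.span {(X : ℤ⟦X⟧) ^ d ^ 2 * (X ^ 2) ^ (n - d + 1)} ≤
      Ideal.span {X ^ (2 * n + 1)} := by
    rw [Ideal.span_singleton_le_span_singleton, ← pow_mul, ← pow_add]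
    have := two_mul_le_add_sq d 1
    exact pow_dvd_pow X (by omega)
  simpa using SModEq.mono hmono (SModEq.mul_left_span_singleton (X ^ d ^ 2) hcongr)

theorem sq_prod_mul_qPochhammer_smodEq_partialTheta (n : ℕ) :
    (∏ i ∈ range n, (1 - (X : ℤ⟦X⟧) ^ (2 * i + 1))) ^ 2 * qPochhammer (X ^ 2) n ≡
      partialTheta n [SMOD Ideal.span {X ^ (2 * n + 1)}] := by
  have htheta : partialTheta n =
      ∑ k ∈ range (2 * n + 1), (-1) ^ Nat.dist k n * (X : ℤ⟦X⟧) ^ Nat.dist k n ^ 2 := by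
    rw [sum_range_two_mul_add_one_dist (fun j ↦ (-1) ^ j * (X : ℤ⟦X⟧) ^ j ^ 2), partialTheta,
      nsmul_eq_mul]
    simp
  rw [htheta, sq_prod_one_sub_pow_eq_sum_qBinomial X_ne_zero, sum_mul]
  refine SModEq.sum fun k hk ↦ ?_
  simpa [mul_assoc] using SModEq.rfl.mul
    (X_pow_mul_qBinomial_mul_qPochhammer_smodEq (n := n) (k := k) (by rw [mem_range] at hk; omega))

theorem partialTheta_mul_prod_one_add_smodEq (n : ℕ) :
    partialTheta n * ∏ i ∈ range (2 * n), (1 + X ^ (i + 1)) ≡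
      qPochhammer X (2 * n) [SMOD Ideal.span {X ^ (2 * n + 1)}] := by
  set P := ∏ i ∈ range n, (1 - (X : ℤ⟦X⟧) ^ (2 * i + 1))
  set E := ∏ i ∈ range (2 * n), (1 + (X : ℤ⟦X⟧) ^ (i + 1))
  have hsplit : qPochhammer X (2 * n) = P * qPochhammer (X ^ 2) n := by
    rw [qPochhammer, prod_range_two_mul, qPochhammer]
    congr 1
    exact prod_congr rfl fun i _ ↦ by ring
  have hdouble : E * qPochhammer X (2 * n) =
      qPochhammer (X ^ 2) n * ∏ i ∈ range n, (1 - (X ^ 2) ^ (n + i + 1)) := by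
    rw [← qPochhammer_add, ← two_mul, qPochhammer, qPochhammer, ← prod_mul_distrib]
    exact prod_congr rfl fun i _ ↦ by ring
  have htail : ∏ i ∈ range n, (1 - ((X : ℤ⟦X⟧) ^ 2) ^ (n + i + 1)) ≡ 1
      [SMOD Ideal.span {X ^ (2 * n + 1)}] := by
    refine SModEq.mono ?_ (prod_one_sub_pow_smodEq_one _ le_rfl n)
    rw [Ideal.span_singleton_le_span_singleton, ← pow_mul]
    exact pow_dvd_pow X (by omega)
  calc partialTheta n * E
      ≡ P ^ 2 * qPochhammer (X ^ 2) n * E [SMOD Ideal.span {X ^ (2 * n + 1)}] :=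
        (sq_prod_mul_qPochhammer_smodEq_partialTheta n).symm.mul SModEq.rfl
    _ = qPochhammer X (2 * n) * ∏ i ∈ range n, (1 - (X ^ 2) ^ (n + i + 1)) := by
        rw [hsplit] at hdouble ⊢
        linear_combination P * hdouble
    _ ≡ qPochhammer X (2 * n) * 1 [SMOD Ideal.span {X ^ (2 * n + 1)}] := SModEq.rfl.mul htail
    _ = qPochhammer X (2 * n) := mul_one _

end Theta

section Overpartitions

open scoped PowerSeries.WithPiTopology

noncomputable def overpartitionSeries : ℤ⟦X⟧ := PowerSeries.mk fun m ↦ (overpartitionCount m : ℤ)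

theorem hasProd_overpartitionSeries :
    HasProd (fun i ↦ (1 + X ^ (i + 1)) * ∑' j, (X ^ (i + 1)) ^ j) overpartitionSeries := by
  have hd := Nat.Partition.hasProd_powerSeriesMk_card_countRestricted ℤ (m := 2) (by norm_num)
  have hp := Nat.Partition.hasProd_powerSeriesMk_card_restricted ℤ (fun _ ↦ True)
  have hval : (PowerSeries.mk fun n ↦ (#(Nat.Partition.countRestricted n 2) : ℤ)) *
      (PowerSeries.mk fun n ↦ (#(Nat.Partition.restricted n fun _ ↦ True) : ℤ)) =
        overpartitionSeries := by
    ext m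
    rw [coeff_mul, overpartitionSeries, coeff_mk, overpartitionCount, Nat.cast_sum]
    refine sum_congr rfl fun p _ ↦ ?_
    simp [Nat.Partition.countRestricted_two, Nat.Partition.restricted, partitionCount]
  refine hval ▸ (hd.mul hp).congr_fun fun i ↦ ?_
  simp [sum_range_succ, pow_mul]

theorem overpartitionSeries_mul_qPochhammer_smodEq (N : ℕ) :
    overpartitionSeries * qPochhammer X N ≡ ∏ i ∈ range N, (1 + X ^ (i + 1))
      [SMOD Ideal.span {X ^ (N + 1)}] := by
  set G : ℕ → ℤ⟦X⟧ := fun i ↦ ∑' j, (X ^ (i + 1)) ^ j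
  have hG (i : ℕ) : G i * (1 - X ^ (i + 1)) = 1 :=
    WithPiTopology.tsum_pow_mul_one_sub_of_constantCoeff_eq_zero (by simp)
  have hOP : overpartitionSeries ≡ ∏ i ∈ range N, (1 + X ^ (i + 1)) * G i
      [SMOD Ideal.span {X ^ (N + 1)}] := by
    refine HasProd.smodEq_prod_range hasProd_overpartitionSeries fun i hi ↦ ?_
    have hle : N + 1 ≤ i + 1 := by omega
    have hnum : 1 + (X : ℤ⟦X⟧) ^ (i + 1) ≡ 1 [SMOD Ideal.span {X ^ (N + 1)}] := by
      rw [SModEq.sub_mem, add_sub_cancel_left]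
      exact Ideal.mem_span_singleton.mpr (pow_dvd_pow X hle)
    have hden : G i ≡ 1 [SMOD Ideal.span {X ^ (N + 1)}] := by
      have h := (SModEq.refl (G i)).mul (one_sub_pow_smodEq_one X hle).symm
      rwa [mul_one, hG] at h
    have h := hnum.mul hden
    rwa [mul_one] at h
  have hprod : (∏ i ∈ range N, (1 + X ^ (i + 1)) * G i) * qPochhammer X N =
      ∏ i ∈ range N, (1 + X ^ (i + 1)) := by
    rw [qPochhammer, ← prod_mul_distrib]
    exact prod_congr rfl fun i _ ↦ by rw [mul_assoc, hG, mul_one]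
  have h := hOP.mul (SModEq.refl (qPochhammer (X : ℤ⟦X⟧) N))
  rwa [hprod] at h

theorem overpartitionSeries_mul_partialTheta_smodEq_one (n : ℕ) :
    overpartitionSeries * partialTheta n ≡ 1 [SMOD Ideal.span {X ^ (2 * n + 1)}] := by
  set E := ∏ i ∈ range (2 * n), (1 + (X : ℤ⟦X⟧) ^ (i + 1))
  have hE : IsUnit E := isUnit_iff_constantCoeff.mpr (by simp [E, map_prod])
  have h : overpartitionSeries * partialTheta n * E ≡ 1 * E [SMOD Ideal.span {X ^ (2 * n + 1)}] :=
    calc overpartitionSeries * partialTheta n * E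
        = overpartitionSeries * (partialTheta n * E) := mul_assoc _ _ _
      _ ≡ overpartitionSeries * qPochhammer X (2 * n) [SMOD Ideal.span {X ^ (2 * n + 1)}] :=
          SModEq.rfl.mul (partialTheta_mul_prod_one_add_smodEq n)
      _ ≡ 1 * E [SMOD Ideal.span {X ^ (2 * n + 1)}] := by
          simpa using overpartitionSeries_mul_qPochhammer_smodEq (2 * n)
  rw [SModEq.sub_mem, Ideal.mem_span_singleton, ← sub_mul, hE.dvd_mul_right] at h
  rwa [SModEq.sub_mem, Ideal.mem_span_singleton]

lemma pbar_natCast (m : ℕ) : pbar m = overpartitionCount m := by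
  simp [pbar]

lemma coeff_overpartitionSeries_mul_X_pow (m e : ℕ) :
    coeff m (overpartitionSeries * X ^ e) = pbar ((m : ℤ) - e) := by
  rw [coeff_mul_X_pow', overpartitionSeries, coeff_mk]
  split_ifs with h
  · rw [← Nat.cast_sub h, pbar_natCast]
  · rw [pbar, if_neg (by omega)]

theorem coeff_overpartitionSeries_mul_partialTheta (m n : ℕ) :
    coeff m (overpartitionSeries * partialTheta n) =
      pbar m + 2 * ∑ j ∈ Icc 1 n, (-1) ^ j * pbar ((m : ℤ) - (j : ℤ) ^ 2) := by
  have h : overpartitionSeries * partialTheta n = overpartitionSeries * X ^ 0 +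
      C 2 * ∑ j ∈ Icc 1 n, C ((-1) ^ j) * (overpartitionSeries * X ^ (j ^ 2)) := by
    simp only [partialTheta, mul_sum, pow_zero, mul_one, mul_add, map_pow, map_neg, map_one,
      map_ofNat]
    congr 1
    exact sum_congr rfl fun _ _ ↦ by ring
  simp only [h, map_add, coeff_C_mul, map_sum, coeff_overpartitionSeries_mul_X_pow, Nat.cast_pow,
    CharP.cast_eq_zero, sub_zero]

theorem pbar_add_two_mul_sum_eq_zero {m n : ℕ} (hm : 1 ≤ m) (hmn : m ≤ 2 * n) :
    pbar m + 2 * ∑ j ∈ Icc 1 n, (-1) ^ j * pbar ((m : ℤ) - (j : ℤ) ^ 2) = 0 := by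
  rw [← coeff_overpartitionSeries_mul_partialTheta,
    smodEq_X_pow_iff.mp (overpartitionSeries_mul_partialTheta_smodEq_one n) m (by omega),
    coeff_one, if_neg (by omega)]

end Overpartitions

section Monotonicity

lemma partitionCount_le_succ (n : ℕ) : partitionCount n ≤ partitionCount (n + 1) := by
  refine Fintype.card_le_of_injective (fun p ↦ ⟨1 ::ₘ p.parts, fun hi ↦ ?_, ?_⟩) fun p q h ↦ ?_
  · rcases Multiset.mem_cons.mp hi with rfl | hi
    · exact Nat.one_pos
    · exact p.parts_pos hi
  · rw [Multiset.sum_cons, p.parts_sum, add_comm]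
  · exact Nat.Partition.ext ((Multiset.cons_inj_right 1).mp (congrArg Nat.Partition.parts h))

lemma partitionCount_pos (n : ℕ) : 0 < partitionCount n := Fintype.card_pos

lemma distincts_nonempty (n : ℕ) : (Nat.Partition.distincts n).Nonempty := by
  refine ⟨Nat.Partition.indiscrete n, mem_filter.mpr ⟨mem_univ _, ?_⟩⟩
  rcases eq_or_ne n 0 with rfl | hn
  · simp
  · simp [Nat.Partition.indiscrete_parts hn]

lemma overpartitionCount_pos (n : ℕ) : 0 < overpartitionCount n := by
  have h := single_le_sum (s := antidiagonal n)
    (f := fun p : ℕ × ℕ ↦ #(Nat.Partition.distincts p.1) * partitionCount p.2)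
    (a := (n, 0)) (fun _ _ ↦ Nat.zero_le _) (mem_antidiagonal.mpr (add_zero n))
  dsimp only at h
  exact lt_of_lt_of_le (Nat.mul_pos (distincts_nonempty n).card_pos (partitionCount_pos 0)) h

lemma overpartitionCount_strictMono : StrictMono overpartitionCount := by
  refine strictMono_nat_of_lt_succ fun n ↦ ?_
  rw [overpartitionCount, overpartitionCount, Nat.sum_antidiagonal_succ']
  exact lt_add_of_pos_of_le (Nat.mul_pos (distincts_nonempty _).card_pos (partitionCount_pos 0))
    (sum_le_sum fun p _ ↦ Nat.mul_le_mul_left _ (partitionCount_le_succ p.2))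

lemma pbar_lt_pbar {a b : ℤ} (hab : a < b) (hb : 0 ≤ b) : pbar a < pbar b := by
  rw [pbar, pbar, if_pos hb]
  split_ifs with ha
  · exact_mod_cast overpartitionCount_strictMono (by omega : a.toNat < b.toNat)
  · exact_mod_cast overpartitionCount_pos _

lemma pbar_nonneg (a : ℤ) : 0 ≤ pbar a := by
  unfold pbar
  split_ifs <;> simp

lemma pbar_mono : Monotone pbar := by
  intro a b hab
  rcases hab.lt_or_eq with hab | rfl
  · rcases lt_or_ge b 0 with hb | hb
    · simp [pbar, if_neg (by omega : ¬ 0 ≤ a), if_neg (not_le.mpr hb)]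
    · exact (pbar_lt_pbar hab hb).le
  · exact le_rfl

end Monotonicity

theorem neg_one_pow_mul_truncated_sum_eq {n : ℕ} (hn : 1 ≤ n) (k : ℕ) :
    (-1 : ℤ) ^ k * (pbar n + 2 * ∑ j ∈ Icc 1 k, (-1) ^ j * pbar ((n : ℤ) - (j : ℤ) ^ 2)) =
      2 * ∑ i ∈ range n, (-1) ^ i * pbar ((n : ℤ) - ((k + 1 + i : ℕ) : ℤ) ^ 2) := by
  set T := ∑ i ∈ range n, (-1 : ℤ) ^ i * pbar ((n : ℤ) - ((k + 1 + i : ℕ) : ℤ) ^ 2)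
  have hrec := pbar_add_two_mul_sum_eq_zero hn (n := k + n) (by omega)
  have htail : ∑ i ∈ range n, (-1 : ℤ) ^ (k + 1 + i) * pbar ((n : ℤ) - ((k + 1 + i : ℕ) : ℤ) ^ 2) =
      -(-1) ^ k * T := by
    rw [mul_sum]
    exact sum_congr rfl fun i _ ↦ by ring
  have hsq : ((-1 : ℤ) ^ k) ^ 2 = 1 := by rw [← pow_mul, mul_comm, pow_mul, neg_one_sq, one_pow]
  rw [sum_Icc_add_eq_sum_Icc_add_sum_range, htail] at hrec
  linear_combination (-1 : ℤ) ^ k * hrec + 2 * T * hsq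

end TruncatedGauss

theorem truncated_gauss_overpartition_ineq_general (n k : ℕ) (hn : 1 ≤ n) :
    0 ≤ (-1 : ℤ) ^ k *
      (pbar n + 2 * ∑ j ∈ Finset.Icc 1 k, (-1 : ℤ) ^ j * pbar ((n : ℤ) - (j : ℤ) ^ 2)) ∧
    (((k : ℤ) + 1) ^ 2 ≤ (n : ℤ) →
      0 < (-1 : ℤ) ^ k *
        (pbar n + 2 * ∑ j ∈ Finset.Icc 1 k, (-1 : ℤ) ^ j * pbar ((n : ℤ) - (j : ℤ) ^ 2))) := by
  set u : ℕ → ℤ := fun i ↦ pbar ((n : ℤ) - ((k + 1 + i : ℕ) : ℤ) ^ 2)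
  have hu : Antitone u := fun i j hij ↦ TruncatedGauss.pbar_mono (by gcongr)
  have hu0 (i : ℕ) : 0 ≤ u i := TruncatedGauss.pbar_nonneg _
  rw [TruncatedGauss.neg_one_pow_mul_truncated_sum_eq hn k]
  refine ⟨by linarith [(hu.sum_range_neg_one_pow_mul_mem_Icc hu0 n).1], fun hkn ↦ ?_⟩
  have h10 : u 1 < u 0 := TruncatedGauss.pbar_lt_pbar
    (by push_cast; nlinarith [Int.natCast_nonneg k]) (by push_cast; linarith)
  have hpos := hu.sum_range_neg_one_pow_mul_pos hu0 h10 (n - 1)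
  rw [Nat.sub_add_cancel hn] at hpos
  linarith

theorem truncated_gauss_overpartition_ineq (n k : ℕ) (hn : 1 ≤ n) (hk : 1 ≤ k) :
    0 ≤ (-1 : ℤ) ^ k *
      (pbar n + 2 * ∑ j ∈ Finset.Icc 1 k, (-1 : ℤ) ^ j * pbar ((n : ℤ) - (j : ℤ) ^ 2)) ∧
    (((k : ℤ) + 1) ^ 2 ≤ (n : ℤ) →
      0 < (-1 : ℤ) ^ k *
        (pbar n + 2 * ∑ j ∈ Finset.Icc 1 k, (-1 : ℤ) ^ j * pbar ((n : ℤ) - (j : ℤ) ^ 2))) :=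
  truncated_gauss_overpartition_ineq_general n k hn
end

section
/- For |q| < 1 and every integer k ≥ 1, ((-q;q)_∞/(q;q)_∞) · (1 + 2 ∑_{j=1}^{k} (-1)^j q^{j²}) = 1 + (-1)^k ∑_{n=k+1}^{∞} ((-q;q)_k (-1;q)_{n-k} q^{(k+1)n} / (q;q)_n) · [n-1 choose k]_q, as an identity of formal power series (equivalently, of analytic functions for |q|<1). -/
/-- infinite q-Pochhammer symbol `(a;q)_∞` -/
noncomputable def qPochInf (a q : ℂ) : ℂ := ∏' n : ℕ, (1 - a * q ^ n)

/-- finite q-Pochhammer symbol `(a;q)_m` -/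
def qPoch (a q : ℂ) (m : ℕ) : ℂ := ∏ i ∈ Finset.range m, (1 - a * q ^ i)

/-- Gaussian binomial coefficient `[M choose N]_q` -/
noncomputable def qBinom (q : ℂ) (M N : ℕ) : ℂ :=
  qPoch q q M / (qPoch q q N * qPoch q q (M - N))

/-!
Let `S(z) = ∑ₘ (-1;q)ₘ/(q;q)ₘ zᵐ`. The recursion of its coefficients gives the functional
equation `(1 - z) S(z) = (1 + z) S(qz)`; iterating it from `z = q` gives
`(-q;q)_K S(q^(K+1)) = (q;q)_K S(q)`, and letting `K → ∞` (where `S(q^(K+1)) → S(0) = 1`)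
identifies `S(q)` with `(-q;q)_∞/(q;q)_∞`.

Let `T_k` be the series on the right-hand side. Up to a factor depending only on `k`, its terms
are the terms of `S(q^(k+1))`, each multiplied by a rational function of `q^i`; pairing the
`i`-th term of `T_(k+1)` with the `(i+1)`-st term of `T_k` and using the functional equation once
more gives `T_(k+1) + T_k = 2 q^((k+1)^2) S(q)`. Induction on `k` from `T_0 = S(q) - 1` finishes.
-/

open Filter Topology

section

variable {q : ℂ}

lemma one_sub_pow_ne_zero (hq : ‖q‖ < 1) {n : ℕ} (hn : n ≠ 0) : 1 - q ^ n ≠ 0 := by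
  refine sub_ne_zero.2 fun h => (pow_lt_one₀ (norm_nonneg q) hq hn).ne ?_
  rw [← norm_pow, ← h, norm_one]

lemma norm_pow_succ_lt_one (hq : ‖q‖ < 1) (n : ℕ) : ‖q ^ (n + 1)‖ < 1 := by
  rw [norm_pow]
  exact pow_lt_one₀ (norm_nonneg q) hq n.succ_ne_zero

lemma tendsto_pow_add_atTop_nhds_zero (hq : ‖q‖ < 1) (c : ℕ) :
    Tendsto (fun n : ℕ => q ^ (n + c)) atTop (𝓝 0) :=
  (tendsto_pow_atTop_nhds_zero_of_norm_lt_one hq).comp (tendsto_add_atTop_nat c)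

lemma qPoch_succ (a q : ℂ) (m : ℕ) : qPoch a q (m + 1) = qPoch a q m * (1 - a * q ^ m) :=
  Finset.prod_range_succ _ _

lemma qPoch_self_ne_zero (hq : ‖q‖ < 1) (m : ℕ) : qPoch q q m ≠ 0 :=
  Finset.prod_ne_zero_iff.2 fun i _ => by
    rw [← pow_succ']
    exact one_sub_pow_ne_zero hq i.succ_ne_zero

lemma summable_norm_mul_pow (hq : ‖q‖ < 1) (a : ℂ) :
    Summable fun n : ℕ => ‖-(a * q ^ n)‖ := by
  simpa [norm_mul, norm_pow] using
    (summable_geometric_of_lt_one (norm_nonneg q) hq).mul_left ‖a‖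

lemma tendsto_qPoch_qPochInf (hq : ‖q‖ < 1) (a : ℂ) :
    Tendsto (qPoch a q) atTop (𝓝 (qPochInf a q)) := by
  have : Multipliable fun n : ℕ => 1 + -(a * q ^ n) :=
    multipliable_one_add_of_summable (summable_norm_mul_pow hq a)
  simp only [← sub_eq_add_neg] at this
  exact this.hasProd.tendsto_prod_nat

lemma qPochInf_self_ne_zero (hq : ‖q‖ < 1) : qPochInf q q ≠ 0 := by
  have := tprod_one_add_ne_zero_of_summable (fun n => ?_) (summable_norm_mul_pow hq q)
  · simp only [← sub_eq_add_neg] at this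
    exact this
  · rw [← sub_eq_add_neg, ← pow_succ']
    exact one_sub_pow_ne_zero hq n.succ_ne_zero

noncomputable def gaussCoeff (q : ℂ) (m : ℕ) : ℂ := qPoch (-1) q m / qPoch q q m

/-- By the `q`-binomial theorem, `gaussSeries q z = (-z;q)_∞ / (z;q)_∞`. -/
noncomputable def gaussSeries (q z : ℂ) : ℂ := ∑' m : ℕ, gaussCoeff q m * z ^ m

@[simp]
lemma gaussCoeff_zero : gaussCoeff q 0 = 1 := by simp [gaussCoeff, qPoch]

lemma gaussCoeff_succ (hq : ‖q‖ < 1) (m : ℕ) :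
    gaussCoeff q (m + 1) = gaussCoeff q m * ((1 + q ^ m) / (1 - q ^ (m + 1))) := by
  have := qPoch_self_ne_zero hq m
  have := one_sub_pow_ne_zero hq m.succ_ne_zero
  rw [gaussCoeff, gaussCoeff, qPoch_succ, qPoch_succ, ← pow_succ']
  field_simp
  ring

lemma tendsto_gaussCoeff_ratio (hq : ‖q‖ < 1) :
    Tendsto (fun m : ℕ => (1 + q ^ m) / (1 - q ^ (m + 1))) atTop (𝓝 1) := by
  have := ((tendsto_pow_add_atTop_nhds_zero hq 0).const_add 1).div
    ((tendsto_pow_add_atTop_nhds_zero hq 1).const_sub 1) (by norm_num)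
  rwa [add_zero, sub_zero, div_one] at this

lemma summable_norm_gaussCoeff_mul_pow (hq : ‖q‖ < 1) {z : ℂ} (hz : ‖z‖ < 1) :
    Summable fun m : ℕ => ‖gaussCoeff q m * z ^ m‖ := by
  obtain ⟨r, hzr, hr⟩ := exists_between hz
  refine summable_of_ratio_norm_eventually_le hr ?_
  have : Tendsto (fun m : ℕ => ‖z * ((1 + q ^ m) / (1 - q ^ (m + 1)))‖) atTop
      (𝓝 ‖z‖) := by
    simpa using ((tendsto_gaussCoeff_ratio hq).const_mul z).norm
  filter_upwards [this.eventually_le_const hzr] with m hm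
  calc ‖‖gaussCoeff q (m + 1) * z ^ (m + 1)‖‖
      = ‖z * ((1 + q ^ m) / (1 - q ^ (m + 1)))‖ * ‖gaussCoeff q m * z ^ m‖ := by
        rw [norm_norm, ← norm_mul, gaussCoeff_succ hq]
        ring_nf
    _ ≤ r * ‖‖gaussCoeff q m * z ^ m‖‖ := by
        rw [norm_norm]
        gcongr

lemma summable_gaussCoeff_mul_pow (hq : ‖q‖ < 1) {z : ℂ} (hz : ‖z‖ < 1) :
    Summable fun m : ℕ => gaussCoeff q m * z ^ m :=
  (summable_norm_gaussCoeff_mul_pow hq hz).of_norm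

lemma tsum_gaussCoeff_succ_mul_pow (hq : ‖q‖ < 1) {z : ℂ} (hz : ‖z‖ < 1) :
    ∑' m : ℕ, gaussCoeff q (m + 1) * z ^ (m + 1) = gaussSeries q z - 1 := by
  rw [gaussSeries, (summable_gaussCoeff_mul_pow hq hz).tsum_eq_zero_add]
  simp

lemma one_sub_mul_gaussSeries (hq : ‖q‖ < 1) {z : ℂ} (hz : ‖z‖ < 1) :
    (1 - z) * gaussSeries q z = (1 + z) * gaussSeries q (q * z) := by
  have hqz : ‖q * z‖ < 1 := by
    rw [norm_mul]
    nlinarith [norm_nonneg q, norm_nonneg z]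
  set a := fun m : ℕ => gaussCoeff q m * z ^ m
  set b := fun m : ℕ => gaussCoeff q m * (q * z) ^ m
  have ha : Summable a := summable_gaussCoeff_mul_pow hq hz
  have hb : Summable b := summable_gaussCoeff_mul_pow hq hqz
  have hshift (m : ℕ) : a (m + 1) - b (m + 1) = z * (a m + b m) := by
    have := one_sub_pow_ne_zero hq m.succ_ne_zero
    simp only [a, b, gaussCoeff_succ hq]
    field_simp
    ring
  have hsum : ∑' m, a m - ∑' m, b m = z * (∑' m, a m + ∑' m, b m) := by
    rw [← ha.tsum_sub hb, (ha.sub hb).tsum_eq_zero_add, ← ha.tsum_add hb, ← tsum_mul_left]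
    simp only [hshift, a, b]
    simp
  simp only [gaussSeries]
  linear_combination hsum

lemma tendsto_gaussSeries_nhds_zero (hq : ‖q‖ < 1) :
    Tendsto (gaussSeries q) (𝓝 0) (𝓝 1) := by
  have hlim : ∑' m : ℕ, gaussCoeff q m * (0 : ℂ) ^ m = 1 := by
    rw [tsum_eq_single 0 fun m hm => by simp [hm]]
    simp
  rw [← hlim]
  refine tendsto_tsum_of_dominated_convergence
    (bound := fun m => ‖gaussCoeff q m * (1 / 2 : ℂ) ^ m‖)
    (summable_norm_gaussCoeff_mul_pow hq (by norm_num))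
    (fun m => ((continuous_pow m).tendsto 0).const_mul _) ?_
  filter_upwards [Metric.closedBall_mem_nhds (0 : ℂ) (by norm_num : (0 : ℝ) < 1 / 2)]
    with z hz m
  rw [norm_mul, norm_mul, norm_pow, norm_pow]
  gcongr
  simpa using hz

lemma qPoch_neg_mul_gaussSeries (hq : ‖q‖ < 1) (K : ℕ) :
    qPoch (-q) q K * gaussSeries q (q ^ (K + 1)) = qPoch q q K * gaussSeries q q := by
  induction K with
  | zero => simp [qPoch]
  | succ K ih =>
    have hfun := one_sub_mul_gaussSeries hq (norm_pow_succ_lt_one hq K)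
    rw [← pow_succ'] at hfun
    rw [qPoch_succ, qPoch_succ]
    linear_combination (-qPoch (-q) q K) * hfun + (1 - q ^ (K + 1)) * ih

lemma qPochInf_neg_div_self (hq : ‖q‖ < 1) :
    qPochInf (-q) q / qPochInf q q = gaussSeries q q := by
  rw [div_eq_iff (qPochInf_self_ne_zero hq), mul_comm]
  have hlhs := (tendsto_qPoch_qPochInf hq (-q)).mul
    ((tendsto_gaussSeries_nhds_zero hq).comp (tendsto_pow_add_atTop_nhds_zero hq 1))
  have hrhs := (tendsto_qPoch_qPochInf hq q).mul_const (gaussSeries q q)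
  rw [mul_one] at hlhs
  exact tendsto_nhds_unique hlhs (hrhs.congr fun K => (qPoch_neg_mul_gaussSeries hq K).symm)

/-- The summand of index `n = i + k + 1` on the right-hand side of `truncated_gauss_square`. -/
noncomputable def truncTerm (q : ℂ) (k i : ℕ) : ℂ :=
  qPoch (-q) q k * qPoch (-1) q (i + 1) * q ^ ((k + 1) * (i + k + 1)) /
    qPoch q q (i + k + 1) * qBinom q (i + k) k

lemma truncTerm_eq_gaussCoeff_mul (hq : ‖q‖ < 1) (k i : ℕ) :
    truncTerm q k i = qPoch (-q) q k / qPoch q q k * q ^ (k * (k + 1)) *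
      (gaussCoeff q (i + 1) * (q ^ (k + 1)) ^ (i + 1)) *
      ((1 - q ^ (i + 1)) / (1 - q ^ (i + k + 1))) := by
  have := qPoch_self_ne_zero hq k
  have := qPoch_self_ne_zero hq i
  have := qPoch_self_ne_zero hq (i + k)
  have := one_sub_pow_ne_zero hq (i.succ_ne_zero)
  have := one_sub_pow_ne_zero hq (i + k).succ_ne_zero
  rw [truncTerm, qBinom, gaussCoeff, Nat.add_sub_cancel, qPoch_succ q q (i + k),
    qPoch_succ q q i, ← pow_succ', ← pow_succ']
  field_simp
  ring

lemma summable_truncTerm (hq : ‖q‖ < 1) (k : ℕ) : Summable (truncTerm q k) := by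
  set C := qPoch (-q) q k / qPoch q q k * q ^ (k * (k + 1))
  have hgauss := (summable_nat_add_iff 1).2
    (summable_gaussCoeff_mul_pow hq (norm_pow_succ_lt_one hq k))
  have hratio :
      Tendsto (fun i : ℕ => (1 - q ^ (i + 1)) / (1 - q ^ (i + k + 1))) atTop (𝓝 1) := by
    have := ((tendsto_pow_add_atTop_nhds_zero hq 1).const_sub 1).div
      ((tendsto_pow_add_atTop_nhds_zero hq (k + 1)).const_sub 1) (by norm_num)
    simp only [sub_zero, div_one, ← add_assoc] at this
    exact this
  refine summable_of_isBigO_nat' (hgauss.mul_left C) ?_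
  have := (Asymptotics.isBigO_refl
    (fun i : ℕ => C * (gaussCoeff q (i + 1) * (q ^ (k + 1)) ^ (i + 1))) atTop).mul
      (hratio.isBigO_one ℂ)
  simpa only [mul_one] using this.congr_left fun i => (truncTerm_eq_gaussCoeff_mul hq k i).symm

lemma truncTerm_succ_add (hq : ‖q‖ < 1) (K i : ℕ) :
    truncTerm q (K + 1) i + truncTerm q K (i + 1) =
      qPoch (-q) q K / qPoch q q K * q ^ ((K + 1) ^ 2) / (1 - q ^ (K + 1)) *
        ((1 - q ^ (K + 1)) * (gaussCoeff q (i + 1) * (q ^ (K + 1)) ^ (i + 1)) +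
          (1 + q ^ (K + 1)) * (gaussCoeff q (i + 1) * (q * q ^ (K + 1)) ^ (i + 1))) := by
  rw [truncTerm_eq_gaussCoeff_mul hq, truncTerm_eq_gaussCoeff_mul hq, qPoch_succ, qPoch_succ,
    gaussCoeff_succ hq (i + 1), ← pow_succ', show i + (K + 1) + 1 = i + 1 + K + 1 by ring]
  have := qPoch_self_ne_zero hq K
  have := one_sub_pow_ne_zero hq (n := K + 1) (by omega)
  have := one_sub_pow_ne_zero hq (n := i + 1 + K + 1) (by omega)
  have := one_sub_pow_ne_zero hq (n := i + 1 + 1) (by omega)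
  field_simp
  ring

lemma truncTerm_zero (hq : ‖q‖ < 1) (K : ℕ) :
    truncTerm q K 0 =
      qPoch (-q) q K / qPoch q q K * q ^ ((K + 1) ^ 2) / (1 - q ^ (K + 1)) * 2 := by
  have := qPoch_self_ne_zero hq K
  have := one_sub_pow_ne_zero hq K.succ_ne_zero
  have : 1 - q ≠ 0 := by simpa using one_sub_pow_ne_zero hq one_ne_zero
  rw [truncTerm_eq_gaussCoeff_mul hq, gaussCoeff_succ hq, gaussCoeff_zero]
  simp only [zero_add, pow_one, pow_zero]
  field_simp
  ring

lemma tsum_truncTerm_succ_add (hq : ‖q‖ < 1) (K : ℕ) :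
    ∑' i, truncTerm q (K + 1) i + ∑' i, truncTerm q K i =
      2 * q ^ ((K + 1) ^ 2) * gaussSeries q q := by
  set z := q ^ (K + 1)
  set D := qPoch (-q) q K / qPoch q q K * q ^ ((K + 1) ^ 2) / (1 - z)
  have hz : ‖z‖ < 1 := norm_pow_succ_lt_one hq K
  have hqz : ‖q * z‖ < 1 := by
    rw [← pow_succ']
    exact norm_pow_succ_lt_one hq (K + 1)
  have htail (w : ℂ) (hw : ‖w‖ < 1) :=
    (summable_nat_add_iff 1).2 (summable_gaussCoeff_mul_pow hq hw)
  have := qPoch_self_ne_zero hq K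
  have : 1 - z ≠ 0 := one_sub_pow_ne_zero hq K.succ_ne_zero
  calc ∑' i, truncTerm q (K + 1) i + ∑' i, truncTerm q K i
      = ∑' i, (truncTerm q (K + 1) i + truncTerm q K (i + 1)) + truncTerm q K 0 := by
        rw [(summable_truncTerm hq K).tsum_eq_zero_add, (summable_truncTerm hq (K + 1)).tsum_add
          ((summable_nat_add_iff 1).2 (summable_truncTerm hq K))]
        ring
    _ = D * ((1 - z) * (gaussSeries q z - 1) + (1 + z) * (gaussSeries q (q * z) - 1)) +
          D * 2 := by
        simp only [truncTerm_succ_add hq, truncTerm_zero hq]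
        rw [tsum_mul_left, ((htail z hz).mul_left _).tsum_add ((htail _ hqz).mul_left _),
          tsum_mul_left, tsum_mul_left, tsum_gaussCoeff_succ_mul_pow hq hz,
          tsum_gaussCoeff_succ_mul_pow hq hqz]
    _ = 2 * D * ((1 - z) * gaussSeries q z) := by
        linear_combination (-D) * one_sub_mul_gaussSeries hq hz
    _ = 2 * q ^ ((K + 1) ^ 2) * (qPoch (-q) q K * gaussSeries q z) / qPoch q q K := by
        simp only [D]
        field_simp
    _ = 2 * q ^ ((K + 1) ^ 2) * gaussSeries q q := by
        rw [qPoch_neg_mul_gaussSeries hq K]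
        field_simp

lemma gaussSeries_mul_one_add_two_mul_sum (hq : ‖q‖ < 1) (k : ℕ) :
    gaussSeries q q * (1 + 2 * ∑ j ∈ Finset.Icc 1 k, (-1 : ℂ) ^ j * q ^ (j ^ 2)) =
      1 + (-1 : ℂ) ^ k * ∑' i, truncTerm q k i := by
  induction k with
  | zero =>
    have hterm (i : ℕ) : truncTerm q 0 i = gaussCoeff q (i + 1) * q ^ (i + 1) := by
      have := one_sub_pow_ne_zero hq i.succ_ne_zero
      simp [truncTerm_eq_gaussCoeff_mul hq, qPoch, this]
    rw [tsum_congr hterm, tsum_gaussCoeff_succ_mul_pow hq hq]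
    simp
  | succ k ih =>
    rw [Finset.sum_Icc_succ_top (by omega)]
    linear_combination ih + (-1 : ℂ) ^ k * tsum_truncTerm_succ_add hq k

end

theorem truncated_gauss_square_general (q : ℂ) (hq : ‖q‖ < 1) (k : ℕ) :
    qPochInf (-q) q / qPochInf q q *
      (1 + 2 * ∑ j ∈ Finset.Icc 1 k, (-1 : ℂ) ^ j * q ^ (j ^ 2)) =
    1 + (-1 : ℂ) ^ k * ∑' i : ℕ,
      qPoch (-q) q k * qPoch (-1) q ((i + k + 1) - k) * q ^ ((k + 1) * (i + k + 1)) /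
        qPoch q q (i + k + 1) * qBinom q ((i + k + 1) - 1) k := by
  have hsummand (i : ℕ) :
      qPoch (-q) q k * qPoch (-1) q ((i + k + 1) - k) * q ^ ((k + 1) * (i + k + 1)) /
        qPoch q q (i + k + 1) * qBinom q ((i + k + 1) - 1) k = truncTerm q k i := by
    rw [show i + k + 1 - k = i + 1 by omega, Nat.add_sub_cancel, truncTerm]
  rw [tsum_congr hsummand, qPochInf_neg_div_self hq]
  exact gaussSeries_mul_one_add_two_mul_sum hq k

theorem truncated_gauss_square (q : ℂ) (hq : ‖q‖ < 1) (k : ℕ) (hk : 1 ≤ k) :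
    qPochInf (-q) q / qPochInf q q *
      (1 + 2 * ∑ j ∈ Finset.Icc 1 k, (-1 : ℂ) ^ j * q ^ (j ^ 2)) =
    1 + (-1 : ℂ) ^ k * ∑' i : ℕ,
      qPoch (-q) q k * qPoch (-1) q ((i + k + 1) - k) * q ^ ((k + 1) * (i + k + 1)) /
        qPoch q q (i + k + 1) * qBinom q ((i + k + 1) - 1) k :=
  truncated_gauss_square_general q hq k
end

section
/- The overpartition function satisfies the recurrence p̄(n) + 2 ∑_{j=1}^{∞} (-1)^j p̄(n - j²) = 0 for all n ≥ 1, where p̄(m) = 0 for m < 0 (the sum is finite). -/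
open Finset

theorem sum_range_mul_sum_range_eq_sum_antidiagonal {β : Type*} [CommSemiring β]
    {f g : ℕ → β} {M : ℕ} (hf : ∀ k, M < k → f k = 0) (hg : ∀ l, M < l → g l = 0) :
    (∑ k ∈ range (M + 1), f k) * ∑ l ∈ range (M + 1), g l =
      ∑ c ∈ range (2 * M + 1), ∑ p ∈ antidiagonal c, f p.1 * g p.2 := by
  rw [sum_mul_sum, ← sum_product', ← sum_fiberwise_of_maps_to (t := range (2 * M + 1))
    (g := fun p => p.1 + p.2) (fun p hp => by simp only [mem_product, mem_range] at hp ⊢; omega)]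
  refine sum_congr rfl fun c _ => sum_subset (fun p hp => ?_) (fun p hp hp' => ?_)
  · simp only [mem_filter] at hp
    exact HasAntidiagonal.mem_antidiagonal.mpr hp.2
  · simp only [mem_filter, mem_product, mem_range, HasAntidiagonal.mem_antidiagonal] at hp hp'
    rcases le_or_gt p.1 M with h1 | h1
    · rw [hg _ (by omega), mul_zero]
    · rw [hf _ h1, zero_mul]

theorem two_mul_choose_two_add_self (k : ℕ) : 2 * k.choose 2 + k = k ^ 2 := by
  induction k with
  | zero => rfl
  | succ k ih => rw [Nat.choose_succ_succ', Nat.choose_one_right]; nlinarith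

theorem sum_range_two_mul_add_one {β : Type*} [AddCommMonoid β] (f : ℕ → β) (M : ℕ) :
    ∑ c ∈ range (2 * M + 1), f c =
      f M + ∑ j ∈ range M, (f (M + (j + 1)) + f (M - (j + 1))) := by
  rw [two_mul, add_assoc, sum_range_add, sum_range_succ', ← sum_range_reflect, sum_add_distrib]
  simp only [add_zero, Nat.sub_sub, add_comm 1]
  abel

theorem sum_range_neg_one_pow_mul_natAbs (g : ℕ → ℤ) (M : ℕ) :
    ∑ c ∈ range (2 * M + 1), (-1) ^ (c + M) * g ((c : ℤ) - M).natAbs =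
      g 0 + 2 * ∑ j ∈ range M, (-1) ^ (j + 1) * g (j + 1) := by
  rw [sum_range_two_mul_add_one, mul_sum]
  congr 1
  · simp [← two_mul]
  · refine sum_congr rfl fun j hj => ?_
    rw [mem_range] at hj
    have hsign : ∀ a b, a = j + 1 + 2 * b → (-1 : ℤ) ^ a = (-1) ^ (j + 1) := by
      rintro a b rfl
      rw [pow_add, pow_mul, neg_one_sq, one_pow, mul_one]
    rw [hsign (M + (j + 1) + M) M (by ring), hsign (M - (j + 1) + M) (M - (j + 1)) (by omega),
      show (((M + (j + 1) : ℕ) : ℤ) - M).natAbs = j + 1 by omega,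
      show (((M - (j + 1) : ℕ) : ℤ) - M).natAbs = j + 1 by omega]
    ring

section GaussBinom

variable {R : Type*} [CommSemiring R] (x : R)

/-- The Gaussian binomial coefficient `[m, k]_x`. -/
def gaussBinom : ℕ → ℕ → R
  | _, 0 => 1
  | 0, _ + 1 => 0
  | m + 1, k + 1 => gaussBinom m k + x ^ (k + 1) * gaussBinom m (k + 1)

@[simp]
theorem gaussBinom_zero_right (m : ℕ) : gaussBinom x m 0 = 1 := by
  cases m <;> rfl

@[simp]
theorem gaussBinom_zero_succ (k : ℕ) : gaussBinom x 0 (k + 1) = 0 := rfl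

theorem gaussBinom_succ_succ (m k : ℕ) :
    gaussBinom x (m + 1) (k + 1) = gaussBinom x m k + x ^ (k + 1) * gaussBinom x m (k + 1) := rfl

theorem gaussBinom_eq_zero_of_lt {m k : ℕ} (h : m < k) : gaussBinom x m k = 0 := by
  induction m generalizing k with
  | zero => obtain ⟨k, rfl⟩ := Nat.exists_eq_succ_of_ne_zero h.ne'; rfl
  | succ m ih =>
    obtain ⟨k, rfl⟩ := Nat.exists_eq_succ_of_ne_zero (Nat.ne_zero_of_lt h)
    rw [gaussBinom_succ_succ, ih (by omega), ih (by omega), mul_zero, add_zero]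

@[simp]
theorem gaussBinom_self (m : ℕ) : gaussBinom x m m = 1 := by
  induction m with
  | zero => rfl
  | succ m ih => rw [gaussBinom_succ_succ, ih, gaussBinom_eq_zero_of_lt x m.lt_succ_self, mul_zero,
      add_zero]

theorem gaussBinom_succ_succ' (m k : ℕ) :
    gaussBinom x (m + 1) (k + 1) = x ^ (m - k) * gaussBinom x m k + gaussBinom x m (k + 1) := by
  induction m generalizing k with
  | zero => cases k <;> simp [gaussBinom_succ_succ]
  | succ m ih =>
    cases k with
    | zero =>
      conv_lhs => rw [gaussBinom_succ_succ, ih]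
      conv_rhs => rw [gaussBinom_succ_succ x m 0]
      simp only [gaussBinom_zero_right, Nat.sub_zero, zero_add, pow_succ]
      ring
    | succ k =>
      conv_lhs => rw [gaussBinom_succ_succ, ih, ih]
      conv_rhs => rw [gaussBinom_succ_succ x m k, gaussBinom_succ_succ x m (k + 1)]
      rcases lt_or_ge k m with hk | hk
      · obtain ⟨d, rfl⟩ := Nat.exists_eq_add_of_lt hk
        rw [show k + d + 1 - k = d + 1 by omega, show k + d + 1 + 1 - (k + 1) = d + 1 by omega,
          show k + d + 1 - (k + 1) = d by omega]
        ring
      · rw [gaussBinom_eq_zero_of_lt x (show m < k + 1 by omega),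
          gaussBinom_eq_zero_of_lt x (show m < k + 1 + 1 by omega)]
        simp

theorem gaussBinom_symm {m k : ℕ} (h : k ≤ m) : gaussBinom x m (m - k) = gaussBinom x m k := by
  induction m generalizing k with
  | zero => obtain rfl := Nat.le_zero.mp h; rfl
  | succ m ih =>
    cases k with
    | zero => simp
    | succ k =>
      rcases (Nat.succ_le_succ_iff.mp h).lt_or_eq with hk | rfl
      · obtain ⟨d, hd⟩ : ∃ d, m - k = d + 1 := ⟨m - k - 1, by omega⟩
        rw [show m + 1 - (k + 1) = d + 1 by omega, gaussBinom_succ_succ', gaussBinom_succ_succ,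
          show m - d = k + 1 by omega, ← hd, ih hk.le, show d = m - (k + 1) by omega, ih hk]
        ring
      · simp

theorem prod_one_add_mul_pow_eq_sum (z : R) (m : ℕ) :
    ∏ i ∈ range m, (1 + z * x ^ i) =
      ∑ k ∈ range (m + 1), x ^ k.choose 2 * z ^ k * gaussBinom x m k := by
  induction m generalizing z with
  | zero => simp
  | succ m ih =>
    -- peel off the factor `i = 0`; the remaining product is the case `m` at `z * x`
    have hchoose : ∀ k, x ^ (k + 1).choose 2 = x ^ k.choose 2 * x ^ k := fun k => by
      rw [Nat.choose_succ_succ', Nat.choose_one_right, pow_add, mul_comm]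
    set A := ∑ k ∈ range (m + 1), x ^ (k + 1).choose 2 * z ^ k * gaussBinom x m k with hAdef
    have hA : ∑ k ∈ range (m + 1), x ^ k.choose 2 * (z * x) ^ k * gaussBinom x m k = A :=
      sum_congr rfl fun k _ => by rw [hchoose, mul_pow]; ring
    have hAz : A * z =
        ∑ k ∈ range (m + 1), x ^ (k + 1).choose 2 * z ^ (k + 1) * gaussBinom x m k := by
      rw [sum_mul]; exact sum_congr rfl fun k _ => by ring
    have hA' : A = 1 + ∑ k ∈ range (m + 1),
        x ^ (k + 1).choose 2 * z ^ (k + 1) * (x ^ (k + 1) * gaussBinom x m (k + 1)) := by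
      rw [hAdef, sum_range_succ', sum_range_succ _ m, gaussBinom_eq_zero_of_lt x m.lt_succ_self]
      simp only [hchoose (_ + 1)]
      simp [add_comm, mul_comm, mul_left_comm, mul_assoc]
    rw [prod_range_succ', funext fun i => show 1 + z * x ^ (i + 1) = 1 + z * x * x ^ i by ring, ih,
      hA, pow_zero, mul_one, mul_add, mul_one, hAz, sum_range_succ' _ (m + 1)]
    simp only [gaussBinom_succ_succ, mul_add, sum_add_distrib]
    rw [hA']
    simp only [Nat.choose_zero_succ, pow_zero, mul_one, gaussBinom_zero_right]
    ring

theorem gaussBinom_add (a b c : ℕ) :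
    gaussBinom x (a + b) c =
      ∑ p ∈ antidiagonal c,
        x ^ (p.1 * (b - p.2)) * gaussBinom x a p.1 * gaussBinom x b p.2 := by
  induction b generalizing c with
  | zero =>
    cases c with
    | zero => simp
    | succ c => simp [Nat.sum_antidiagonal_succ']
  | succ b ih =>
    cases c with
    | zero => simp
    | succ c =>
      rw [← add_assoc, gaussBinom_succ_succ, ih, ih, Nat.sum_antidiagonal_succ',
        Nat.sum_antidiagonal_succ']
      simp only [gaussBinom_succ_succ, gaussBinom_zero_right, mul_add, sum_add_distrib, mul_sum]
      have hterm : ∀ p ∈ antidiagonal c,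
          x ^ (c + 1) *
              (x ^ (p.1 * (b - (p.2 + 1))) * gaussBinom x a p.1 * gaussBinom x b (p.2 + 1)) =
            x ^ (p.1 * (b + 1 - (p.2 + 1))) * gaussBinom x a p.1 *
              (x ^ (p.2 + 1) * gaussBinom x b (p.2 + 1)) := by
        intro p hp
        rw [HasAntidiagonal.mem_antidiagonal] at hp
        rcases lt_or_ge p.2 b with hb | hb
        · obtain ⟨d, hd⟩ := Nat.exists_eq_add_of_lt hb
          rw [hd, show p.2 + d + 1 + 1 - (p.2 + 1) = d + 1 by omega,
            show p.2 + d + 1 - (p.2 + 1) = d by omega, ← hp]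
          ring
        · rw [gaussBinom_eq_zero_of_lt x (show b < p.2 + 1 by omega)]
          simp
      rw [sum_congr rfl hterm]
      simp only [Nat.sub_zero, Nat.add_sub_add_right]
      ring

end GaussBinom

section QPochhammer

variable {R : Type*} [CommRing R] (x : R)

/-- `(x; x)_r` -/
def qPochhammer (r : ℕ) : R := ∏ i ∈ range r, (1 - x ^ (i + 1))

theorem gaussBinom_mul_qPochhammer_mul_qPochhammer {m k : ℕ} (h : k ≤ m) :
    gaussBinom x m k * qPochhammer x k * qPochhammer x (m - k) = qPochhammer x m := by
  induction m generalizing k with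
  | zero => obtain rfl := Nat.le_zero.mp h; simp [qPochhammer]
  | succ m ih =>
    cases k with
    | zero => simp [qPochhammer]
    | succ k =>
      rw [gaussBinom_succ_succ, Nat.add_sub_add_right]
      rcases (Nat.succ_le_succ_iff.mp h).lt_or_eq with hk | rfl
      · obtain ⟨d, rfl⟩ := Nat.exists_eq_add_of_lt hk
        have h1 := ih (k := k) (by omega)
        have h2 := ih (k := k + 1) (by omega)
        rw [show k + d + 1 - k = d + 1 by omega] at h1 ⊢
        rw [show k + d + 1 - (k + 1) = d by omega] at h2
        simp only [qPochhammer, prod_range_succ] at h1 h2 ⊢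
        linear_combination (1 - x ^ (k + 1)) * h1 + x ^ (k + 1) * (1 - x ^ (d + 1)) * h2
      · simp [qPochhammer, prod_range_succ, gaussBinom_eq_zero_of_lt x k.lt_succ_self]

theorem prod_one_sub_pow_odd_eq_sum (M : ℕ) :
    ∏ i ∈ range M, (1 - x ^ (2 * i + 1)) =
      ∑ k ∈ range (M + 1), (-1) ^ k * x ^ (k ^ 2) * gaussBinom (x ^ 2) M k := by
  rw [prod_congr rfl fun i _ => show 1 - x ^ (2 * i + 1) = 1 + -x * (x ^ 2) ^ i by ring,
    prod_one_add_mul_pow_eq_sum]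
  refine sum_congr rfl fun k _ => ?_
  rw [← two_mul_choose_two_add_self, neg_pow, pow_add, pow_mul]
  ring

theorem prod_one_sub_pow_odd_sq (M : ℕ) :
    (∏ i ∈ range M, (1 - x ^ (2 * i + 1))) ^ 2 =
      ∑ c ∈ range (2 * M + 1),
        (-1) ^ (c + M) * x ^ (((c : ℤ) - M).natAbs ^ 2) * gaussBinom (x ^ 2) (2 * M) c := by
  -- the second factor is reflected, `k ↦ M - k`, so that its Cauchy product with the first one
  -- is q-Vandermonde for `gaussBinom (x ^ 2) (M + M)`
  have hreflect : ∏ i ∈ range M, (1 - x ^ (2 * i + 1)) =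
      ∑ l ∈ range (M + 1), (-1) ^ (M - l) * x ^ ((M - l) ^ 2) * gaussBinom (x ^ 2) M l := by
    rw [prod_one_sub_pow_odd_eq_sum, ← sum_range_reflect]
    refine sum_congr rfl fun l hl => ?_
    rw [mem_range] at hl
    rw [Nat.add_sub_cancel, gaussBinom_symm _ (by omega)]
  rw [sq]
  nth_rewrite 1 [prod_one_sub_pow_odd_eq_sum]
  rw [hreflect, sum_range_mul_sum_range_eq_sum_antidiagonal
    (fun k hk => by rw [gaussBinom_eq_zero_of_lt _ hk, mul_zero])
    (fun l hl => by rw [gaussBinom_eq_zero_of_lt _ hl, mul_zero])]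
  refine sum_congr rfl fun c _ => ?_
  rw [two_mul, gaussBinom_add, mul_sum]
  refine sum_congr rfl fun p hp => ?_
  rw [HasAntidiagonal.mem_antidiagonal] at hp
  subst hp
  rcases le_or_gt p.2 M with hM | hM
  · obtain ⟨d, rfl⟩ := Nat.exists_eq_add_of_le hM
    have hexp : p.1 ^ 2 + d ^ 2 =
        (((p.1 + p.2 : ℕ) : ℤ) - (p.2 + d : ℕ)).natAbs ^ 2 + 2 * (p.1 * d) := by
      zify
      rw [sq_abs]
      ring
    have hq : x ^ (p.1 ^ 2) * x ^ (d ^ 2) =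
        x ^ ((((p.1 + p.2 : ℕ) : ℤ) - (p.2 + d : ℕ)).natAbs ^ 2) * x ^ (2 * (p.1 * d)) := by
      rw [← pow_add, ← pow_add, hexp]
    rw [Nat.add_sub_cancel_left, show p.1 + p.2 + (p.2 + d) = p.1 + d + 2 * p.2 by ring,
      pow_add _ (p.1 + d), pow_mul, neg_one_sq, one_pow, mul_one, ← pow_mul]
    linear_combination ((-1) ^ (p.1 + d) * gaussBinom (x ^ 2) (p.2 + d) p.1 *
      gaussBinom (x ^ 2) (p.2 + d) p.2) * hq
  · rw [gaussBinom_eq_zero_of_lt _ hM]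
    ring

theorem prod_one_add_pow_mul_qPochhammer (M : ℕ) :
    (∏ i ∈ range M, (1 + x ^ (i + 1))) * qPochhammer x M = qPochhammer (x ^ 2) M := by
  rw [qPochhammer, qPochhammer, ← prod_mul_distrib]
  exact prod_congr rfl fun i _ => by ring

theorem prod_one_sub_pow_odd_mul_qPochhammer (M : ℕ) :
    (∏ i ∈ range M, (1 - x ^ (2 * i + 1))) * qPochhammer (x ^ 2) M = qPochhammer x (2 * M) := by
  induction M with
  | zero => simp [qPochhammer]
  | succ M ih =>
    rw [qPochhammer, show 2 * (M + 1) = 2 * M + 1 + 1 by ring, qPochhammer, prod_range_succ,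
      prod_range_succ, prod_range_succ, prod_range_succ, ← qPochhammer, ← qPochhammer, ← ih]
    ring

end QPochhammer

section Truncation

open PowerSeries

variable {R : Type*} [CommRing R]

theorem smodEq_X_pow_iff {f g : R⟦X⟧} {N : ℕ} :
    f ≡ g [SMOD Ideal.span {X ^ N}] ↔ ∀ m < N, coeff m f = coeff m g := by
  simp only [SModEq.sub_mem, Ideal.mem_span_singleton, X_pow_dvd_iff, map_sub, sub_eq_zero]

theorem pow_smodEq_zero {x : R⟦X⟧} (hx : constantCoeff x = 0) {N t : ℕ} (h : N ≤ t) :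
    x ^ t ≡ 0 [SMOD Ideal.span {X ^ N}] := by
  rw [SModEq.zero, Ideal.mem_span_singleton]
  exact (pow_dvd_pow X h).trans (pow_dvd_pow_of_dvd (X_dvd_iff.mpr hx) t)

theorem one_add_pow_smodEq_one {x : R⟦X⟧} (hx : constantCoeff x = 0) {N t : ℕ} (h : N ≤ t) :
    1 + x ^ t ≡ 1 [SMOD Ideal.span {X ^ N}] := by
  simpa using SModEq.rfl.add (pow_smodEq_zero hx h)

theorem one_sub_pow_smodEq_one {x : R⟦X⟧} (hx : constantCoeff x = 0) {N t : ℕ} (h : N ≤ t) :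
    1 - x ^ t ≡ 1 [SMOD Ideal.span {X ^ N}] := by
  simpa using SModEq.rfl.sub (pow_smodEq_zero hx h)

theorem SModEq.of_mul_right_isUnit {A : Type*} [CommRing A] {I : Ideal A} {a b u : A}
    (h : a * u ≡ b * u [SMOD I]) (hu : IsUnit u) : a ≡ b [SMOD I] := by
  obtain ⟨u, rfl⟩ := hu
  simpa using h.mul (SModEq.refl (↑u⁻¹ : A))

theorem isUnit_qPochhammer {x : R⟦X⟧} (hx : constantCoeff x = 0) (r : ℕ) :
    IsUnit (qPochhammer x r) :=
  isUnit_iff_constantCoeff.mpr (by simp [qPochhammer, map_prod, hx])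

theorem qPochhammer_smodEq {x : R⟦X⟧} (hx : constantCoeff x = 0) {N r s : ℕ} (hr : N ≤ r)
    (hs : r ≤ s) : qPochhammer x s ≡ qPochhammer x r [SMOD Ideal.span {X ^ N}] := by
  rw [show qPochhammer x s = qPochhammer x r * ∏ i ∈ Ico r s, (1 - x ^ (i + 1)) from
    (prod_range_mul_prod_Ico _ hs).symm]
  simpa using (SModEq.refl (qPochhammer x r)).mul
    (SModEq.prod fun i hi => one_sub_pow_smodEq_one hx (by rw [mem_Ico] at hi; omega))

theorem gaussBinom_mul_qPochhammer_smodEq_one {x : R⟦X⟧} (hx : constantCoeff x = 0)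
    {N m k r : ℕ} (hk : N ≤ k) (hmk : k + N ≤ m) (hr : N ≤ r) :
    gaussBinom x m k * qPochhammer x r ≡ 1 [SMOD Ideal.span {X ^ N}] := by
  have hkr : qPochhammer x r ≡ qPochhammer x k [SMOD Ideal.span {X ^ N}] :=
    (qPochhammer_smodEq hx le_rfl hr).trans (qPochhammer_smodEq hx le_rfl hk).symm
  refine SModEq.of_mul_right_isUnit (u := qPochhammer x (m - k)) ?_ (isUnit_qPochhammer hx _)
  calc gaussBinom x m k * qPochhammer x r * qPochhammer x (m - k)
      ≡ gaussBinom x m k * qPochhammer x k * qPochhammer x (m - k)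
        [SMOD Ideal.span {X ^ N}] := (SModEq.rfl.mul hkr).mul SModEq.rfl
    _ = qPochhammer x m := gaussBinom_mul_qPochhammer_mul_qPochhammer x (by omega)
    _ ≡ 1 * qPochhammer x (m - k) [SMOD Ideal.span {X ^ N}] := by
      rw [one_mul]; exact qPochhammer_smodEq hx (by omega) (by omega)

end Truncation

section Theta

open PowerSeries

variable {R : Type*} [CommRing R]

variable (R) in
/-- `∑_{|j| ≤ M} (-1)^j X^(j^2)`, indexed by `c = M + j`. -/
noncomputable def truncatedTheta (M : ℕ) : R⟦X⟧ :=
  ∑ c ∈ range (2 * M + 1), (-1) ^ (c + M) * X ^ (((c : ℤ) - M).natAbs ^ 2)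

theorem prod_one_sub_X_pow_odd_sq_mul_smodEq {N M : ℕ} (hM : 2 * N ≤ M) :
    (∏ i ∈ range M, (1 - (X : R⟦X⟧) ^ (2 * i + 1))) ^ 2 * qPochhammer (X ^ 2) M ≡
      truncatedTheta R M [SMOD Ideal.span {X ^ N}] := by
  have hX2 : constantCoeff ((X : R⟦X⟧) ^ 2) = 0 := by simp
  rw [prod_one_sub_pow_odd_sq, sum_mul, truncatedTheta]
  refine SModEq.sum fun c _ => ?_
  rw [mul_assoc]
  by_cases hc' : ((c : ℤ) - M).natAbs ^ 2 < N
  · have hdist : ((c : ℤ) - M).natAbs < N :=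
      lt_of_le_of_lt (Nat.le_self_pow two_ne_zero _) hc'
    simpa using SModEq.rfl.mul
      (gaussBinom_mul_qPochhammer_smodEq_one hX2 (by omega) (by omega) (by omega))
  · have h0 : (X : R⟦X⟧) ^ (((c : ℤ) - M).natAbs ^ 2) ≡ 0 [SMOD Ideal.span {X ^ N}] :=
      pow_smodEq_zero (by simp) (not_lt.mp hc')
    have h1 := (SModEq.refl ((-1 : R⟦X⟧) ^ (c + M))).mul h0
    rw [mul_zero] at h1
    have h2 := h1.mul (SModEq.refl (gaussBinom (X ^ 2) (2 * M) c * qPochhammer (X ^ 2) M))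
    rw [zero_mul] at h2
    exact h2.trans h1.symm

theorem prod_one_sub_X_pow_odd_mul_prod_one_add_X_pow_smodEq {N M : ℕ} (hM : N ≤ M) :
    (∏ i ∈ range M, (1 - (X : R⟦X⟧) ^ (2 * i + 1))) * ∏ i ∈ range M, (1 + X ^ (i + 1))
      ≡ 1 [SMOD Ideal.span {X ^ N}] := by
  refine SModEq.of_mul_right_isUnit (u := qPochhammer X M) ?_ (isUnit_qPochhammer constantCoeff_X M)
  rw [mul_assoc, prod_one_add_pow_mul_qPochhammer, prod_one_sub_pow_odd_mul_qPochhammer, one_mul]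
  exact qPochhammer_smodEq constantCoeff_X hM (by omega)

theorem truncatedTheta_mul_prod_one_add_X_pow_smodEq {N M : ℕ} (hM : 2 * N ≤ M) :
    truncatedTheta R M * ∏ i ∈ range M, (1 + (X : R⟦X⟧) ^ (i + 1)) ≡
      qPochhammer X M [SMOD Ideal.span {X ^ N}] := by
  have hθ := (prod_one_sub_X_pow_odd_sq_mul_smodEq (R := R) hM).symm.mul
    (SModEq.refl (∏ i ∈ range M, (1 + (X : R⟦X⟧) ^ (i + 1))))
  have heuler := ((prod_one_sub_X_pow_odd_mul_prod_one_add_X_pow_smodEq (R := R)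
    (show N ≤ M by omega)).pow 2).mul (SModEq.refl (qPochhammer (X : R⟦X⟧) M))
  rw [one_pow, one_mul, mul_pow] at heuler
  refine hθ.trans ?_
  rw [← prod_one_add_pow_mul_qPochhammer]
  convert heuler using 1
  ring

end Theta

section GeneratingFunctions

open PowerSeries PowerSeries.WithPiTopology

theorem HasProd.smodEq_prod_range_s12 {R : Type*} [CommRing R] [TopologicalSpace R] [T2Space R]
    {f : ℕ → R⟦X⟧} {a : R⟦X⟧} (h : HasProd f a) {N M : ℕ}
    (hf : ∀ i, M ≤ i → f i ≡ 1 [SMOD Ideal.span {X ^ N}]) :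
    a ≡ ∏ i ∈ range M, f i [SMOD Ideal.span {X ^ N}] := by
  have hclosed :
      IsClosed {g : R⟦X⟧ | g ≡ ∏ i ∈ range M, f i [SMOD Ideal.span {X ^ N}]} := by
    simp only [smodEq_X_pow_iff, Set.ofPred_forall]
    exact isClosed_iInter fun m => isClosed_iInter fun _ =>
      isClosed_eq (continuous_coeff R m) continuous_const
  refine hclosed.mem_of_tendsto h.tendsto_prod_nat
    (Filter.eventually_atTop.mpr ⟨M, fun K hK => ?_⟩)
  rw [Set.mem_ofPred_eq, ← prod_range_mul_prod_Ico _ hK]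
  simpa using (SModEq.refl (∏ i ∈ range M, f i)).mul
    (SModEq.prod fun i hi => hf i (mem_Ico.mp hi).1)

theorem hasProd_partitionCount :
    HasProd (fun i => ∑' j : ℕ, (X : ℤ⟦X⟧) ^ ((i + 1) * j))
      (PowerSeries.mk fun n => (partitionCount n : ℤ)) := by
  have h := Nat.Partition.hasProd_powerSeriesMk_card_restricted ℤ (fun _ => True)
  simp only [if_true] at h
  convert h using 3 with n
  · rfl
  · rw [partitionCount, Nat.Partition.restricted, filter_true_of_mem fun _ _ _ _ => trivial,
      card_univ]

theorem mk_partitionCount_mul_qPochhammer_smodEq_one {N M : ℕ} (h : N ≤ M) :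
    PowerSeries.mk (fun n => (partitionCount n : ℤ)) * qPochhammer X M ≡ 1
      [SMOD Ideal.span {X ^ N}] := by
  have hE := (multipliable_one_sub_X_pow (R := ℤ)).hasProd
  have hinv : HasProd (fun _ : ℕ => (1 : ℤ⟦X⟧))
      (PowerSeries.mk (fun n => (partitionCount n : ℤ)) * ∏' i, (1 - X ^ (i + 1))) := by
    convert hasProd_partitionCount.mul hE with i
    simp_rw [pow_mul]
    exact (tsum_pow_mul_one_sub_of_constantCoeff_eq_zero (by simp)).symm
  rw [← hinv.unique hasProd_one]
  exact SModEq.rfl.mul (hE.smodEq_prod_range_s12 fun i hi =>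
    one_sub_pow_smodEq_one constantCoeff_X (by omega)).symm

theorem mk_card_distincts_smodEq {N M : ℕ} (h : N ≤ M) :
    PowerSeries.mk (fun n => (#(Nat.Partition.distincts n) : ℤ)) ≡
      ∏ i ∈ range M, (1 + X ^ (i + 1)) [SMOD Ideal.span {X ^ N}] := by
  have hD := Nat.Partition.hasProd_powerSeriesMk_card_countRestricted ℤ two_pos
  have hfactor : ∀ i, ∑ j ∈ range 2, (X : ℤ⟦X⟧) ^ ((i + 1) * j) = 1 + X ^ (i + 1) :=
    fun i => by simp [sum_range_succ]
  simp only [Nat.Partition.countRestricted_two, hfactor] at hD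
  exact hD.smodEq_prod_range_s12 fun i hi => one_add_pow_smodEq_one constantCoeff_X (by omega)

theorem mk_overpartitionCount :
    PowerSeries.mk (fun n => (overpartitionCount n : ℤ)) =
      PowerSeries.mk (fun n => (#(Nat.Partition.distincts n) : ℤ)) *
        PowerSeries.mk (fun n => (partitionCount n : ℤ)) := by
  ext n
  simp [overpartitionCount, coeff_mul]

theorem truncatedTheta_mul_mk_overpartitionCount_smodEq_one {N M : ℕ} (hM : 2 * N ≤ M) :
    truncatedTheta ℤ M * PowerSeries.mk (fun n => (overpartitionCount n : ℤ)) ≡ 1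
      [SMOD Ideal.span {X ^ N}] := by
  have hN : N ≤ M := by omega
  have hD := (SModEq.refl (truncatedTheta ℤ M)).mul (mk_card_distincts_smodEq hN)
  have hθD := (hD.trans (truncatedTheta_mul_prod_one_add_X_pow_smodEq hM)).mul
    (SModEq.refl (PowerSeries.mk fun n => (partitionCount n : ℤ)))
  rw [mk_overpartitionCount, ← mul_assoc]
  refine hθD.trans ?_
  rw [mul_comm]
  exact mk_partitionCount_mul_qPochhammer_smodEq_one hN

theorem coeff_X_pow_mul_mk_overpartitionCount (n e : ℕ) :
    coeff n (X ^ e * PowerSeries.mk (fun n => (overpartitionCount n : ℤ))) =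
      pbar (n - e) := by
  rw [coeff_X_pow_mul', pbar]
  split_ifs with h1 h2 h2
  · rw [coeff_mk]; congr; omega
  · omega
  · omega
  · rfl

theorem coeff_truncatedTheta_mul_mk_overpartitionCount (n M : ℕ) :
    coeff n (truncatedTheta ℤ M * PowerSeries.mk (fun n => (overpartitionCount n : ℤ))) =
      ∑ c ∈ range (2 * M + 1), (-1) ^ (c + M) * pbar (n - ((c : ℤ) - M).natAbs ^ 2) := by
  simp only [truncatedTheta, sum_mul, map_sum, mul_assoc]
  refine sum_congr rfl fun c _ => ?_
  rw [show (-1 : ℤ⟦X⟧) ^ (c + M) = C ((-1) ^ (c + M)) by simp, coeff_C_mul,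
    coeff_X_pow_mul_mk_overpartitionCount]
  push_cast
  rfl

end GeneratingFunctions

theorem overpartition_recurrence (n : ℕ) (hn : 1 ≤ n) :
    pbar n + 2 * ∑' j : ℕ, (-1 : ℤ) ^ (j + 1) * pbar ((n : ℤ) - ((j : ℤ) + 1) ^ 2) = 0 := by
  have hcoeff := smodEq_X_pow_iff.mp (truncatedTheta_mul_mk_overpartitionCount_smodEq_one
    (N := n + 1) (M := 2 * (n + 1)) le_rfl) n n.lt_succ_self
  rw [coeff_truncatedTheta_mul_mk_overpartitionCount, PowerSeries.coeff_one, if_neg (by omega),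
    sum_range_neg_one_pow_mul_natAbs (fun e => pbar (n - e ^ 2))] at hcoeff
  rw [tsum_eq_sum (s := range (2 * (n + 1))) fun j hj => ?_]
  · simpa using hcoeff
  · rw [mem_range, not_lt] at hj
    rw [pbar, if_neg (by nlinarith), mul_zero]
end
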